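/- Let X be a Hadamard space and ξ ∈ ∂∞X. On the set of geodesic rays asymptotic to ξ, the asymptotic distance d_ξ(ρ₁,ρ₂) = inf_{t₁,t₂→∞} d(ρ₁(t₁),ρ₂(t₂)) induces a metric on the set X*_ξ of strong asymptote classes, and the metric completion X_ξ of X*_ξ is a Hadamard space. -/

import Mathlib

/-!
Common geometric background definitions for formalizing results of
B. Leeb, "A characterization of irreducible symmetric spaces and Euclidean
buildings of higher rank by their asymptotic geometry".

Hadamard spaces are formalized as complete geodesic metric spaces satisfying
the CN-inequality of Bruhat–Tits (the CAT(0) comparison condition).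
The ideal boundary is the set of asymptote classes of unit-speed geodesic
rays, equipped with the quotient of the topology of pointwise convergence
of rays (the cone topology).  The Tits metric is the supremum over base
points of the Alexandrov angle between representing rays.
-/

noncomputable section

open Metric Set

universe u v w

namespace CAT0Geo

/-! ## Geodesics -/

/-- `γ` is a unit speed geodesic on the subset `s` of `ℝ`. -/
def IsGeodesicOn {X : Type u} [MetricSpace X] (γ : ℝ → X) (s : Set ℝ) : Prop :=
  ∀ ⦃t₁ : ℝ⦄, t₁ ∈ s → ∀ ⦃t₂ : ℝ⦄, t₂ ∈ s → dist (γ t₁) (γ t₂) = |t₁ - t₂|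

/-- A unit speed geodesic segment defined on `[a,b]`. -/
def IsGeodesicSegment {X : Type u} [MetricSpace X] (γ : ℝ → X) (a b : ℝ) : Prop :=
  IsGeodesicOn γ (Set.Icc a b)

/-- A unit speed geodesic ray (defined on `[0,∞)`). -/
def IsGeodesicRay {X : Type u} [MetricSpace X] (ρ : ℝ → X) : Prop :=
  IsGeodesicOn ρ (Set.Ici 0)

/-- A complete unit speed geodesic. -/
def IsGeodesicLine {X : Type u} [MetricSpace X] (c : ℝ → X) : Prop :=
  IsGeodesicOn c Set.univ

/-- A geodesic metric space: any two points are joined by a geodesic segment. -/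
def GeodesicSpace (X : Type u) [MetricSpace X] : Prop :=
  ∀ x y : X, ∃ γ : ℝ → X, IsGeodesicSegment γ 0 (dist x y) ∧ γ 0 = x ∧ γ (dist x y) = y

/-- The CAT(0) comparison condition, in the form of the CN-inequality of
Bruhat and Tits (for midpoints). -/
def CAT0 (X : Type u) [MetricSpace X] : Prop :=
  ∀ x y z m : X, dist y m = dist y z / 2 → dist m z = dist y z / 2 →
    dist x m ^ 2 ≤ (dist x y ^ 2 + dist x z ^ 2) / 2 - dist y z ^ 2 / 4

/-- A Hadamard space: a complete geodesic metric space which is nonpositively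
curved in the global sense of CAT(0) distance comparison. -/
structure HadamardSpace (X : Type u) [MetricSpace X] : Prop where
  complete : CompleteSpace X
  geodesic : GeodesicSpace X
  cat0 : CAT0 X

/-- Every geodesic segment is contained in a complete geodesic
("extendible geodesic segments / extendible rays / geodesic completeness"). -/
def GeodesicallyComplete (X : Type u) [MetricSpace X] : Prop :=
  ∀ (γ : ℝ → X) (a b : ℝ), a ≤ b → IsGeodesicSegment γ a b →
    ∃ c : ℝ → X, IsGeodesicLine c ∧ ∀ t ∈ Set.Icc a b, c t = γ t

/-- Convexity of a subset of a metric space: it contains all geodesic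
segments between its points. -/
def GeodConvex {X : Type u} [MetricSpace X] (C : Set X) : Prop :=
  ∀ (γ : ℝ → X) (a b : ℝ), a ≤ b → IsGeodesicSegment γ a b →
    γ a ∈ C → γ b ∈ C → ∀ t ∈ Set.Icc a b, γ t ∈ C

/-! ## The ideal boundary -/

/-- The space of unit speed geodesic rays in `X`, topologized (as a subspace of
the product `ℝ → X`) by pointwise convergence; on geodesic rays this coincides
with uniform convergence on compact subsets. -/
def Rays (X : Type u) [MetricSpace X] : Type u := {ρ : ℝ → X // IsGeodesicRay ρ}

instance raysTopology (X : Type u) [MetricSpace X] : TopologicalSpace (Rays X) :=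
  inferInstanceAs (TopologicalSpace {ρ : ℝ → X // IsGeodesicRay ρ})

/-- Two rays are asymptotic if they are at bounded distance. -/
def asymp (X : Type u) [MetricSpace X] : Rays X → Rays X → Prop := fun ρ₁ ρ₂ =>
  ∃ C : ℝ, ∀ t : ℝ, 0 ≤ t → dist (ρ₁.1 t) (ρ₂.1 t) ≤ C

/-- The ideal (geometric) boundary `∂∞X`: asymptote classes of geodesic rays,
equipped with the cone topology (quotient topology from the space of rays). -/
def IdealBoundary (X : Type u) [MetricSpace X] : Type u := Quot (asymp X)

instance idealBoundaryTopology (X : Type u) [MetricSpace X] :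
    TopologicalSpace (IdealBoundary X) :=
  inferInstanceAs (TopologicalSpace (Quot (asymp X)))

/-- The asymptote class of a geodesic ray. -/
def rayClass {X : Type u} [MetricSpace X] (ρ : Rays X) : IdealBoundary X := Quot.mk _ ρ

/-- The set of ideal boundary points of a subset `C ⊆ X`: classes of rays
running inside `C`. -/
def setBoundary {X : Type u} [MetricSpace X] (C : Set X) : Set (IdealBoundary X) :=
  {ξ | ∃ ρ : Rays X, (∀ t : ℝ, 0 ≤ t → ρ.1 t ∈ C) ∧ rayClass ρ = ξ}

/-- The boundary map induced by an isometric equivalence. -/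
def bdryMap {X : Type u} {Y : Type v} [MetricSpace X] [MetricSpace Y] (g : X ≃ᵢ Y) :
    IdealBoundary X → IdealBoundary Y :=
  Quot.map
    (fun ρ => ⟨fun t => g (ρ.1 t), fun _ hu _ hv => by
      rw [g.isometry.dist_eq]; exact ρ.2 hu hv⟩)
    (fun ρ₁ ρ₂ h => by
      obtain ⟨C, hC⟩ := h
      exact ⟨C, fun t ht => by rw [g.isometry.dist_eq]; exact hC t ht⟩)

/-- The boundary map induced by the inclusion of a subset `C ⊆ Y`. -/
def inclBoundaryMap {Y : Type u} [MetricSpace Y] (C : Set Y) :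
    IdealBoundary (↥C) → IdealBoundary Y :=
  Quot.map
    (fun ρ => ⟨fun t => ((ρ.1 t : ↥C) : Y), fun u hu v hv => by
      have h := ρ.2 hu hv
      rwa [Subtype.dist_eq] at h⟩)
    (fun ρ₁ ρ₂ h => by
      obtain ⟨c, hc⟩ := h
      refine ⟨c, fun t ht => ?_⟩
      have h' := hc t ht
      rwa [Subtype.dist_eq] at h')

/-- The boundary map induced by a homothety with scale factor `a`. -/
def homothetyBdryMap {X : Type u} {Y : Type v} [MetricSpace X] [MetricSpace Y]
    (Φ : X → Y) (a : ℝ) (ha : 0 < a) (hΦ : ∀ x y, dist (Φ x) (Φ y) = a * dist x y) :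
    IdealBoundary X → IdealBoundary Y :=
  Quot.map
    (fun ρ => ⟨fun t => Φ (ρ.1 (t / a)), by
      intro u hu v hv
      have hu0 : (0:ℝ) ≤ u := hu
      have hv0 : (0:ℝ) ≤ v := hv
      have hu' : (0:ℝ) ≤ u / a := div_nonneg hu0 ha.le
      have hv' : (0:ℝ) ≤ v / a := div_nonneg hv0 ha.le
      rw [hΦ, ρ.2 hu' hv', div_sub_div_same, abs_div, abs_of_pos ha]
      field_simp⟩)
    (fun ρ₁ ρ₂ h => by
      obtain ⟨C, hC⟩ := h
      refine ⟨a * C, fun t ht => ?_⟩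
      rw [hΦ]
      exact mul_le_mul_of_nonneg_left (hC (t / a) (div_nonneg ht ha.le)) ha.le)

/-! ## Angles and the Tits metric -/

/-- The comparison angle at `x` of the triangle `(x,y,z)`. -/
def cangle {X : Type u} [MetricSpace X] (x y z : X) : ℝ :=
  Real.arccos ((dist x y ^ 2 + dist x z ^ 2 - dist y z ^ 2) / (2 * dist x y * dist x z))

/-- The (Alexandrov) angle between two rays with the same initial point,
computed (in a CAT(0) space) as the infimum of comparison angles. -/
def rayAngle {X : Type u} [MetricSpace X] (ρ₁ ρ₂ : ℝ → X) : ℝ :=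
  ⨅ p : {p : ℝ × ℝ // 0 < p.1 ∧ 0 < p.2}, cangle (ρ₁ 0) (ρ₁ p.1.1) (ρ₂ p.1.2)

/-- The Alexandrov angle at `x` between the geodesic segments `[x,y]` and `[x,z]`,
computed (in a CAT(0) space) as the infimum of comparison angles over points
on the two segments. -/
def alexAngle {X : Type u} [MetricSpace X] (x y z : X) : ℝ :=
  ⨅ p : {p : X × X // p.1 ≠ x ∧ p.2 ≠ x ∧ dist x p.1 + dist p.1 y = dist x y ∧
      dist x p.2 + dist p.2 z = dist x z}, cangle x p.1.1 p.1.2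

/-- The Tits angle metric on the ideal boundary:
`∠Tits(ξ,η) = sup_{x ∈ X} ∠ₓ(ξ,η)`. -/
def titsDist (X : Type u) [MetricSpace X] : IdealBoundary X → IdealBoundary X → ℝ :=
  fun ξ η => sSup {a : ℝ | ∃ ρ₁ ρ₂ : Rays X, ρ₁.1 0 = ρ₂.1 0 ∧
    rayClass ρ₁ = ξ ∧ rayClass ρ₂ = η ∧ a = rayAngle ρ₁.1 ρ₂.1}

/-- `X` has at least three ideal boundary points. -/
def ThreeBoundaryPoints (X : Type u) [MetricSpace X] : Prop :=
  ∃ ξ₁ ξ₂ ξ₃ : IdealBoundary X, ξ₁ ≠ ξ₂ ∧ ξ₁ ≠ ξ₃ ∧ ξ₂ ≠ ξ₃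

/-! ## Busemann functions, types of isometries -/

/-- The Busemann function of the ray `ρ`; for a geodesic ray the defining
expression is non-increasing in `t`, so the limit is an infimum. -/
def busemann {X : Type u} [MetricSpace X] (ρ : ℝ → X) (x : X) : ℝ :=
  ⨅ t : {t : ℝ // 0 ≤ t}, (dist x (ρ t.1) - t.1)

/-- An axial isometry: its displacement function attains a positive minimum. -/
def IsAxialIsometry {X : Type u} [MetricSpace X] (g : X ≃ᵢ X) : Prop :=
  ∃ x : X, 0 < dist x (g x) ∧ ∀ y : X, dist x (g x) ≤ dist y (g y)

/-- `g` preserves every horosphere centered at the ideal point `ξ`. -/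
def PreservesHorospheresAt {X : Type u} [MetricSpace X] (g : X ≃ᵢ X)
    (ξ : IdealBoundary X) : Prop :=
  ∀ ρ : Rays X, rayClass ρ = ξ → ∀ x : X, busemann ρ.1 (g x) = busemann ρ.1 x

/-- Membership in the parabolic stabilizer `P_ξ` of a set `H` of isometries:
the elliptic and parabolic (i.e. non-axial) isometries in `H` preserving every
horosphere centered at `ξ`. -/
def InParabolicStabilizer {X : Type u} [MetricSpace X] (H : Set (X ≃ᵢ X))
    (g : X ≃ᵢ X) (ξ : IdealBoundary X) : Prop :=
  g ∈ H ∧ ¬ IsAxialIsometry g ∧ PreservesHorospheresAt g ξ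

/-! ## Products, trees, branching -/

/-- `f` realizes `X` as the metric product `Y × Z` (distances combined in the
Euclidean / ℓ² way). -/
def IsL2ProductMap {X : Type u} {Y : Type v} {Z : Type w} [MetricSpace X]
    [MetricSpace Y] [MetricSpace Z] (f : X → Y × Z) : Prop :=
  Function.Bijective f ∧
    ∀ a b : X, dist a b ^ 2 = dist (f a).1 (f b).1 ^ 2 + dist (f a).2 (f b).2 ^ 2

/-- `X` is isometric to the metric product of `Y` and `Z`. -/
def IsMetricProductOf (X : Type u) (Y : Type v) (Z : Type w) [MetricSpace X]
    [MetricSpace Y] [MetricSpace Z] : Prop :=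
  ∃ f : X → Y × Z, IsL2ProductMap f

/-- A metric tree: a geodesic space which is 0-hyperbolic (all geodesic
triangles are tripods). -/
def MetricTree (T : Type u) [MetricSpace T] : Prop :=
  GeodesicSpace T ∧ ∀ x y z w : T,
    dist x y + dist z w ≤ max (dist x z + dist y w) (dist x w + dist y z)

/-- A branch point of a tree: three segments issue from it in pairwise
"opposite" directions. -/
def IsBranchPoint {T : Type u} [MetricSpace T] (v : T) : Prop :=
  ∃ x y z : T, x ≠ v ∧ y ≠ v ∧ z ≠ v ∧
    dist x y = dist x v + dist v y ∧ dist x z = dist x v + dist v z ∧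
    dist y z = dist y v + dist v z

/-- All edges (distances between branch points) of the tree are multiples of a
fixed positive length. -/
def EqualEdgeLengths (T : Type u) [MetricSpace T] : Prop :=
  ∃ L : ℝ, 0 < L ∧ ∀ v w : T, IsBranchPoint v → IsBranchPoint w →
    ∃ n : ℕ, dist v w = n * L

/-- Two distinct complete geodesics branch: they share a geodesic ray. -/
def LinesBranch {X : Type u} [MetricSpace X] (c₁ c₂ : ℝ → X) : Prop :=
  IsGeodesicLine c₁ ∧ IsGeodesicLine c₂ ∧ Set.range c₁ ≠ Set.range c₂ ∧
    ∃ ρ : ℝ → X, IsGeodesicRay ρ ∧ ρ '' Set.Ici 0 ⊆ Set.range c₁ ∧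
      ρ '' Set.Ici 0 ⊆ Set.range c₂

/-- Some complete geodesics in `X` branch. -/
def HasBranchingGeodesics (X : Type u) [MetricSpace X] : Prop :=
  ∃ c₁ c₂ : ℝ → X, LinesBranch c₁ c₂

/-- `X` has no Euclidean de Rham factor: it does not split off a factor `ℝ`. -/
def HasEuclideanDeRhamFactor (X : Type u) [MetricSpace X] : Prop :=
  ∃ (Z : Type u) (iZ : MetricSpace Z), @IsMetricProductOf X ℝ Z _ _ iZ

/-- `X` is irreducible: it admits no metric product decomposition with two
nontrivial factors. -/
def IsIrreducibleSpace (X : Type u) [MetricSpace X] : Prop :=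
  ¬ ∃ (Y : Type u) (iY : MetricSpace Y) (Z : Type u) (iZ : MetricSpace Z),
      (∃ y₁ y₂ : Y, y₁ ≠ y₂) ∧ (∃ z₁ z₂ : Z, z₁ ≠ z₂) ∧
      @IsMetricProductOf X Y Z _ iY iZ

/-! ## Flats, rank, symmetric spaces -/

/-- Euclidean `r`-space. -/
abbrev Eucl (r : ℕ) : Type := EuclideanSpace ℝ (Fin r)

/-- The real inner product on `Eucl r`. -/
def rinner {r : ℕ} (p q : Eucl r) : ℝ := @inner ℝ _ _ p q

/-- `X` has rank `r`: it contains an `r`-flat but no `(r+1)`-flat. -/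
def HasRank (X : Type u) [MetricSpace X] (r : ℕ) : Prop :=
  (∃ f : Eucl r → X, Isometry f) ∧ ¬ (∃ f : Eucl (r+1) → X, Isometry f)

/-- A Riemannian symmetric space of noncompact type, characterized metrically:
a locally compact, geodesically complete Hadamard space possessing a geodesic
point reflection at every point, homogeneous, and without Euclidean de Rham
factor. -/
structure IsSymmetricSpaceNCT (X : Type u) [MetricSpace X] : Prop where
  hadamard : HadamardSpace X
  locallyCompact : LocallyCompactSpace X
  geodComplete : GeodesicallyComplete X
  pointSymmetry : ∀ x : X, ∃ σ : X ≃ᵢ X, σ x = x ∧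
    ∀ c : ℝ → X, IsGeodesicLine c → c 0 = x → ∀ t : ℝ, σ (c t) = c (-t)
  homogeneous : ∀ x y : X, ∃ g : X ≃ᵢ X, g x = y
  noEuclideanFactor : ¬ HasEuclideanDeRhamFactor X

/-! ## Spherical buildings -/

/-- The unit sphere of `Eucl r`. -/
def unitSphere (r : ℕ) : Set (Eucl r) := Metric.sphere (0 : Eucl r) 1

/-- The round (angular) metric on the unit sphere. -/
def sphDist {r : ℕ} (p q : Eucl r) : ℝ := Real.arccos (rinner p q)

/-- The reflection of `Eucl r` in the hyperplane orthogonal to `v`. -/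
def reflMap {r : ℕ} (v : Eucl r) (x : Eucl r) : Eucl r :=
  x - ((2 * rinner v x / rinner v v) • v)

/-- A structure of a spherical building of dimension `r - 1` on a set `B`
with "distance function" `d` (for us: the ideal boundary with the Tits
metric), modelled on the spherical Coxeter complex of a finite reflection
group `W` acting on the unit sphere of `Eucl r`.  Charts are isometric
embeddings of the round unit sphere (their images are the apartments), any
two points lie in a common apartment, and coordinate changes are induced by
elements of `W`.  The distance `d` is a metric satisfying the CAT(1)
comparison (CN) inequality. -/
structure SphericalBuildingStructure (B : Type v) (d : B → B → ℝ) (r : ℕ) where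
  W : Subgroup (Eucl r ≃ₗᵢ[ℝ] Eucl r)
  W_finite : (W : Set (Eucl r ≃ₗᵢ[ℝ] Eucl r)).Finite
  W_reflections : Subgroup.closure
    {g : Eucl r ≃ₗᵢ[ℝ] Eucl r | g ∈ W ∧ ∃ v : Eucl r, v ≠ 0 ∧ ∀ x, g x = reflMap v x} = W
  charts : Set (Eucl r → B)
  charts_nonempty : charts.Nonempty
  charts_isometric : ∀ ι ∈ charts, ∀ p ∈ unitSphere r, ∀ q ∈ unitSphere r,
    d (ι p) (ι q) = sphDist p q
  charts_cover : ∀ x y : B, ∃ ι ∈ charts,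
    x ∈ ι '' unitSphere r ∧ y ∈ ι '' unitSphere r
  charts_compatible : ∀ ι₁ ∈ charts, ∀ ι₂ ∈ charts,
    ∃ w : Eucl r ≃ₗᵢ[ℝ] Eucl r, w ∈ W ∧
      ∀ p ∈ unitSphere r, ι₂ p ∈ ι₁ '' unitSphere r → ι₂ p = ι₁ (w p)
  d_self : ∀ x : B, d x x = 0
  d_comm : ∀ x y : B, d x y = d y x
  d_triangle : ∀ x y z : B, d x z ≤ d x y + d y z
  cat1 : ∀ x y z m : B, d x y + d x z + d y z < 2 * Real.pi → d y z < Real.pi →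
    d y m = d y z / 2 → d m z = d y z / 2 →
    (Real.cos (d x y) + Real.cos (d x z)) / 2 ≤ Real.cos (d x m) * Real.cos (d y z / 2)

namespace SphericalBuildingStructure

variable {B : Type v} {d : B → B → ℝ} {r : ℕ}

/-- `v` is a root: the reflection in the hyperplane `v^⊥` belongs to `W`. -/
def IsRoot (S : SphericalBuildingStructure B d r) (v : Eucl r) : Prop :=
  v ≠ 0 ∧ ∃ g ∈ S.W, ∀ x, g x = reflMap v x

/-- Thickness: every wall of every apartment bounds a half-apartment which
meets that apartment only in the wall (so every wall bounds at least three
half-apartments; equivalently, every panel is adjacent to at least three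
chambers). -/
def Thick (S : SphericalBuildingStructure B d r) : Prop :=
  ∀ ι ∈ S.charts, ∀ v : Eucl r, S.IsRoot v → ∃ ι' ∈ S.charts,
    (∀ p ∈ unitSphere r, rinner v p ≤ 0 → ι' p = ι p) ∧
    (∀ p ∈ unitSphere r, 0 < rinner v p → ι' p ∉ ι '' unitSphere r)

/-- Irreducibility: the reflection representation of the Weyl group is
irreducible. -/
def Irreducible (S : SphericalBuildingStructure B d r) : Prop :=
  ∀ V : Submodule ℝ (Eucl r), (∀ g ∈ S.W, ∀ x ∈ V, g x ∈ V) → V = ⊥ ∨ V = ⊤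

end SphericalBuildingStructure

/-- The Tits boundary of `X` is a thick spherical building (modelled on a
Coxeter complex of rank `r`). -/
def TitsBoundaryThickBuilding (X : Type u) [MetricSpace X] (r : ℕ) : Prop :=
  ∃ S : SphericalBuildingStructure (IdealBoundary X) (titsDist X) r, S.Thick

/-- The Tits boundary of `X` is a thick irreducible spherical building. -/
def TitsBoundaryThickIrreducibleBuilding (X : Type u) [MetricSpace X] (r : ℕ) : Prop :=
  ∃ S : SphericalBuildingStructure (IdealBoundary X) (titsDist X) r,
    S.Thick ∧ S.Irreducible

/-! ## Euclidean buildings -/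

/-- A Euclidean building structure of rank `r` on a Hadamard space `X`:
an atlas of isometric embeddings of `Eucl r` (apartments) with coordinate
changes in an affine Weyl group `W_aff` (whose rotational part `Wlin` is a
finite reflection group), such that every geodesic segment, ray and complete
geodesic lies in an apartment, segments have well-defined directions in the
model Weyl chamber (the quotient of `Eucl r` by `Wlin`), and the angle
rigidity property holds. -/
structure EuclideanBuildingStructure (X : Type u) [MetricSpace X] (r : ℕ) where
  hadamard : HadamardSpace X
  Wlin : Subgroup (Eucl r ≃ₗᵢ[ℝ] Eucl r)
  Wlin_finite : (Wlin : Set (Eucl r ≃ₗᵢ[ℝ] Eucl r)).Finite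
  Wlin_reflections : Subgroup.closure
    {g : Eucl r ≃ₗᵢ[ℝ] Eucl r | g ∈ Wlin ∧ ∃ v : Eucl r, v ≠ 0 ∧ ∀ x, g x = reflMap v x} = Wlin
  Waff : Set (Eucl r → Eucl r)
  Waff_id : id ∈ Waff
  Waff_comp : ∀ g ∈ Waff, ∀ h ∈ Waff, g ∘ h ∈ Waff
  Waff_inv : ∀ g ∈ Waff, ∃ h ∈ Waff, g ∘ h = id ∧ h ∘ g = id
  Waff_rotational_part : ∀ g ∈ Waff, ∃ w ∈ Wlin, ∃ v : Eucl r, ∀ x, g x = w x + v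
  Waff_rotations_onto : ∀ w ∈ Wlin, ∃ g ∈ Waff, ∃ v : Eucl r, ∀ x, g x = w x + v
  charts : Set (Eucl r → X)
  charts_nonempty : charts.Nonempty
  charts_isometric : ∀ ι ∈ charts, Isometry ι
  charts_compatible : ∀ ι₁ ∈ charts, ∀ ι₂ ∈ charts, ∃ g ∈ Waff,
    ∀ p : Eucl r, ι₂ p ∈ Set.range ι₁ → ι₂ p = ι₁ (g p)
  segments_in_apartments : ∀ (γ : ℝ → X) (a b : ℝ), IsGeodesicSegment γ a b →
    ∃ ι ∈ charts, ∀ t ∈ Set.Icc a b, γ t ∈ Set.range ι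
  rays_in_apartments : ∀ ρ : ℝ → X, IsGeodesicRay ρ →
    ∃ ι ∈ charts, ∀ t : ℝ, 0 ≤ t → ρ t ∈ Set.range ι
  lines_in_apartments : ∀ c : ℝ → X, IsGeodesicLine c →
    ∃ ι ∈ charts, ∀ t : ℝ, c t ∈ Set.range ι
  direction : {p : X × X // p.1 ≠ p.2} →
    Quot (fun p q : Eucl r => ∃ w ∈ Wlin, w p = q)
  direction_charts : ∀ ι ∈ charts, ∀ p q : Eucl r, ∀ h : ι p ≠ ι q,
    direction ⟨(ι p, ι q), h⟩ = Quot.mk _ (‖q - p‖⁻¹ • (q - p))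
  angle_rigidity : ∃ A : (Quot (fun p q : Eucl r => ∃ w ∈ Wlin, w p = q)) ×
      (Quot (fun p q : Eucl r => ∃ w ∈ Wlin, w p = q)) → Set ℝ,
    (∀ c, (A c).Finite) ∧ ∀ x y z : X, ∀ hy : x ≠ y, ∀ hz : x ≠ z,
      alexAngle x y z ∈ A (direction ⟨(x, y), hy⟩, direction ⟨(x, z), hz⟩)

/-! ## Isometry groups, topology -/

instance isomEquivTopology (X : Type u) [MetricSpace X] : TopologicalSpace (X ≃ᵢ X) :=
  TopologicalSpace.induced
    (fun g => ((⟨g, g.continuous⟩ : C(X, X)), (⟨(g.symm : X → X), g.symm.continuous⟩ : C(X, X))))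
    inferInstance

/-- Helper: the topology coming from an explicitly given metric. -/
abbrev mtop {α : Type u} (i : MetricSpace α) : TopologicalSpace α :=
  i.toPseudoMetricSpace.toUniformSpace.toTopologicalSpace

abbrev pems (α : Type u) (i : MetricSpace α) : PseudoEMetricSpace α :=
  @PseudoMetricSpace.toPseudoEMetricSpace α i.toPseudoMetricSpace

/-- Helper: the type of self-isometries for an explicitly given metric. -/
abbrev IsomT (α : Type u) (i : MetricSpace α) : Type u :=
  @IsometryEquiv α α (pems α i) (pems α i)

abbrev isomOne (α : Type u) (i : MetricSpace α) : IsomT α i :=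
  @IsometryEquiv.refl α (pems α i)

/-- Helper: the identity component of the full isometry group, for an
explicitly given metric. -/
abbrev isomIdentityComponent (α : Type u) (i : MetricSpace α) : Set (IsomT α i) :=
  @connectedComponent (IsomT α i) (@isomEquivTopology α i) (isomOne α i)

abbrev bdryMapOf (α : Type u) (i : MetricSpace α) (g : IsomT α i) :
    (@IdealBoundary α i) → (@IdealBoundary α i) := @bdryMap α α i i g

/-! ## Minimality, parallel sets, central geodesics -/

/-- `Y` coincides with its convex core: `Y` has no proper nonempty closed
convex subset with full ideal boundary. -/
def IsMinimalHadamard (Y : Type u) [MetricSpace Y] : Prop :=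
  ∀ C : Set Y, C.Nonempty → IsClosed C → GeodConvex C →
    setBoundary C = Set.univ → C = Set.univ

/-- `T` is a minimal nonempty closed convex subset with full ideal boundary
(a convex core of `Y`). -/
def IsMinimalFullConvex {Y : Type u} [MetricSpace Y] (T : Set Y) : Prop :=
  T.Nonempty ∧ IsClosed T ∧ GeodConvex T ∧ setBoundary T = Set.univ ∧
    ∀ T' : Set Y, T'.Nonempty → IsClosed T' → GeodConvex T' → T' ⊆ T →
      setBoundary T' = Set.univ → T' = T

/-- Two complete geodesics are parallel (at bounded Hausdorff distance). -/
def ParallelLines {Y : Type u} [MetricSpace Y] (c₁ c₂ : ℝ → Y) : Prop :=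
  IsGeodesicLine c₁ ∧ IsGeodesicLine c₂ ∧
    EMetric.hausdorffEdist (Set.range c₁) (Set.range c₂) ≠ ⊤

/-- The circumradius of a complete geodesic within its parallel set. -/
def lineCircumradius {Y : Type u} [MetricSpace Y] (c : ℝ → Y) : ℝ :=
  ⨆ c' : {c' : ℝ → Y // ParallelLines c c'},
    Metric.hausdorffDist (Set.range c) (Set.range c'.1)

/-- A central geodesic: a complete geodesic which is the circumcenter of the
compact cross section of its parallel set, i.e. which minimizes the
circumradius among all geodesics parallel to it. -/
def IsCentralGeodesic {Y : Type u} [MetricSpace Y] (c : ℝ → Y) : Prop :=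
  IsGeodesicLine c ∧ ∀ c' : ℝ → Y, ParallelLines c c' →
    lineCircumradius c ≤ lineCircumradius c'

/-- The set of translational parts of elements of `H` translating along the
oriented geodesic `c` — the image of the homomorphism
`trans : Stab_H(c) → ℝ`. -/
def transShifts {Y : Type u} [MetricSpace Y] (H : Subgroup (Y ≃ᵢ Y)) (c : ℝ → Y) :
    Set ℝ :=
  {s : ℝ | ∃ g ∈ H, ∀ t : ℝ, g (c t) = c (t + s)}

/-- The parabolic stabilizer of each ideal boundary point within `H` acts
transitively on the complement of that point in the ideal boundary. -/
def ParabolicallyTransitive {Y : Type u} [MetricSpace Y] (H : Subgroup (Y ≃ᵢ Y)) : Prop :=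
  ∀ ξ η₁ η₂ : IdealBoundary Y, η₁ ≠ ξ → η₂ ≠ ξ →
    ∃ g : Y ≃ᵢ Y, InParabolicStabilizer (H : Set (Y ≃ᵢ Y)) g ξ ∧ bdryMap g η₁ = η₂

end CAT0Geo

namespace CAT0Geo

/-! ## Spheres and hemispheres in the Tits boundary -/

/-- `s ⊆ ∂∞Y` is a unit sphere of dimension `d` with respect to the Tits
metric. -/
def IsUnitSphereIn {Y : Type u} [MetricSpace Y] (s : Set (IdealBoundary Y)) (d : ℕ) : Prop :=
  ∃ F : Eucl (d+1) → IdealBoundary Y, Set.InjOn F (unitSphere (d+1)) ∧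
    (∀ p ∈ unitSphere (d+1), ∀ q ∈ unitSphere (d+1),
      titsDist Y (F p) (F q) = sphDist p q) ∧
    s = F '' unitSphere (d+1)

/-- The unit sphere `s ⊆ ∂∞Y` of dimension `d` bounds a unit hemisphere:
there is a subset of the Tits boundary isometric to a closed hemisphere of the
round unit `(d+1)`-sphere whose boundary sphere is `s`. -/
def BoundsHemisphere {Y : Type u} [MetricSpace Y] (s : Set (IdealBoundary Y)) (d : ℕ) : Prop :=
  ∃ G : Eucl (d+2) → IdealBoundary Y,
    Set.InjOn G {p ∈ unitSphere (d+2) | 0 ≤ p 0} ∧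
    (∀ p ∈ {p ∈ unitSphere (d+2) | 0 ≤ p 0}, ∀ q ∈ {p ∈ unitSphere (d+2) | 0 ≤ p 0},
      titsDist Y (G p) (G q) = sphDist p q) ∧
    G '' {p ∈ unitSphere (d+2) | p 0 = 0} = s

/-! ## Convex subsets with prescribed boundary -/

/-- The family `C_A` of closed convex subsets `C ⊆ Y` with `∂∞C ⊇ A`. -/
def convexFamily {Y : Type u} [MetricSpace Y] (A : Set (IdealBoundary Y)) : Set (Set Y) :=
  {C : Set Y | IsClosed C ∧ GeodConvex C ∧ A ⊆ setBoundary C}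

/-- `C` is a minimal element of the family `C_A`. -/
def IsMinimalIn {Y : Type u} [MetricSpace Y] (A : Set (IdealBoundary Y)) (C : Set Y) : Prop :=
  C ∈ convexFamily A ∧ ∀ C' ∈ convexFamily A, C' ⊆ C → C' = C

/-! ## Walls, panels, parallel sets, cross sections -/

section Building

variable {B : Type v} {d : B → B → ℝ} {r : ℕ}

/-- A wall of the spherical building `B`: the image under a chart of the
intersection of the model sphere with the reflection hyperplane of a root;
a singular sphere of codimension 1. -/
def SphericalBuildingStructure.IsWall (S : SphericalBuildingStructure B d r)
    (s : Set B) : Prop :=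
  ∃ ι ∈ S.charts, ∃ v : Eucl r, S.IsRoot v ∧
    s = ι '' {p ∈ unitSphere r | rinner v p = 0}

/-- The closed face of the model Coxeter complex spanned by the point `p`. -/
def SphericalBuildingStructure.modelClosedFace (S : SphericalBuildingStructure B d r)
    (p : Eucl r) : Set (Eucl r) :=
  {q ∈ unitSphere r | ∀ v : Eucl r, S.IsRoot v →
    ((rinner v p = 0 → rinner v q = 0) ∧ (0 < rinner v p → 0 ≤ rinner v q) ∧
      (rinner v p < 0 → rinner v q ≤ 0))}

/-- A panel of the spherical building `B`: the image under a chart of a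
closed codimension-one face of the model Coxeter complex. -/
def SphericalBuildingStructure.IsPanel (S : SphericalBuildingStructure B d r)
    (τ : Set B) : Prop :=
  ∃ ι ∈ S.charts, ∃ p ∈ unitSphere r,
    Module.finrank ℝ (Submodule.span ℝ {v : Eucl r | S.IsRoot v ∧ rinner v p = 0}) = 1 ∧
    τ = ι '' S.modelClosedFace p

end Building

/-- The union `P(s)` of all `k`-flats in `X` with ideal boundary `s`. -/
def parallelSetOf {X : Type u} [MetricSpace X] (k : ℕ) (s : Set (IdealBoundary X)) :
    Set X :=
  {x : X | ∃ f : Eucl k → X, Isometry f ∧ setBoundary (Set.range f) = s ∧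
    x ∈ Set.range f}

/-- The cross section of the parallel set `P(s)` through the point `x`:
the set of points of `P(s)` lying on the same horospheres as `x` for all
centers in `s`. -/
def crossSectionAt {X : Type u} [MetricSpace X] (k : ℕ) (s : Set (IdealBoundary X))
    (x : X) : Set X :=
  {y ∈ parallelSetOf k s | ∀ ρ : Rays X, rayClass ρ ∈ s →
    busemann ρ.1 y = busemann ρ.1 x}

/-- `K` is a convex core of the cross section of the parallel set of the
singular sphere `s` (boundary of `k`-flats): a minimal nonempty closed convex
subset of a cross section of `P(s)` with the full ideal boundary of the cross
section. -/
def IsMinimalCoreOver {X : Type u} [MetricSpace X] (k : ℕ)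
    (s : Set (IdealBoundary X)) (K : Set X) : Prop :=
  ∃ x : X, x ∈ K ∧ K ⊆ crossSectionAt k s x ∧ IsClosed K ∧ GeodConvex K ∧
    setBoundary K = setBoundary (crossSectionAt k s x) ∧
    ∀ K' : Set X, K'.Nonempty → IsClosed K' → GeodConvex K' → K' ⊆ K →
      setBoundary K' = setBoundary (crossSectionAt k s x) → K' = K

/-! ## Strong asymptote classes -/

/-- The asymptotic ("nearest point") distance between two rays. -/
def asympDistRays {X : Type u} [MetricSpace X] (ρ₁ ρ₂ : ℝ → X) : ℝ :=
  ⨅ p : {p : ℝ × ℝ // 0 ≤ p.1 ∧ 0 ≤ p.2}, dist (ρ₁ p.1.1) (ρ₂ p.1.2)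

/-- The type of geodesic rays asymptotic to the ideal point `ξ`. -/
def raysTo {X : Type u} [MetricSpace X] (ξ : IdealBoundary X) : Type u :=
  {ρ : Rays X // rayClass ρ = ξ}

/-- The asymptotic distance between two points, measured through rays from
them to the ideal point `ξ` (the distance between the corresponding strong
asymptote classes). -/
def rayPointDist {X : Type u} [MetricSpace X] (ξ : IdealBoundary X) (y y' : X) : ℝ :=
  ⨅ p : {p : Rays X × Rays X // p.1.1 0 = y ∧ p.2.1 0 = y' ∧
      rayClass p.1 = ξ ∧ rayClass p.2 = ξ},
    asympDistRays p.1.1.1 p.1.2.1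

/-! ## Perspectivities and holonomy -/

/-- The perspectivity relation between two convex cores `K, K'` (of cross
sections of parallel sets of two singular spheres both containing the simplex
`τ`): `y` and `y'` correspond iff the rays from them to the points of `τ`
realize the minimal asymptotic distance between `K` and `K'` (the canonical
identification through the space of strong asymptote classes). -/
def perspRel {X : Type u} [MetricSpace X] (τ : Set (IdealBoundary X))
    (K K' : Set X) (y y' : X) : Prop :=
  y ∈ K ∧ y' ∈ K' ∧ ∀ ξ ∈ τ, ∀ z ∈ K, ∀ z' ∈ K',
    rayPointDist ξ y y' ≤ rayPointDist ξ z z'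

/-- Composites of perspectivities between convex cores along chains of walls
in which consecutive walls share a panel. -/
inductive PerspChain {X : Type u} [MetricSpace X] {r : ℕ}
    (S : SphericalBuildingStructure (IdealBoundary X) (titsDist X) r) :
    Set X → Set X → (X → X → Prop) → Prop
  | base (s : Set (IdealBoundary X)) (K : Set X) (hs : S.IsWall s)
      (hK : IsMinimalCoreOver (r-1) s K) :
      PerspChain S K K (fun y y' => y = y' ∧ y ∈ K)
  | step {K₀ K K' : Set X} {R : X → X → Prop} (h : PerspChain S K₀ K R)
      (τ s s' : Set (IdealBoundary X)) (hτ : S.IsPanel τ)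
      (hs : S.IsWall s) (hs' : S.IsWall s') (hτs : τ ⊆ s) (hτs' : τ ⊆ s')
      (hK : IsMinimalCoreOver (r-1) s K) (hK' : IsMinimalCoreOver (r-1) s' K') :
      PerspChain S K₀ K' (fun y y'' => ∃ y', R y y' ∧ perspRel τ K K' y' y'')

/-- The holonomy group `Hol(τ)` at the panel `τ`, realized on the convex core
`K₀` (of a cross section of the parallel set of a wall containing `τ`):
the closure, in the isometry group of `K₀`, of the set of isometries induced
by composites of perspectivities along closed chains. -/
def holonomySet {X : Type u} [MetricSpace X] {r : ℕ}
    (S : SphericalBuildingStructure (IdealBoundary X) (titsDist X) r)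
    (K₀ : Set X) : Set (↥K₀ ≃ᵢ ↥K₀) :=
  closure {g : ↥K₀ ≃ᵢ ↥K₀ | ∃ R : X → X → Prop, PerspChain S K₀ K₀ R ∧
    ∀ y y' : ↥K₀, (R y.1 y'.1 ↔ g y = y')}

/-! ## Links -/

/-- The link of a singular sphere `s` in the Tits boundary: the set of points
at Tits distance `≤ π/2` from all points of `s` (the centers of the unit
hemispheres with boundary `s`).  For a wall `s` containing a panel `τ` as a
top-dimensional simplex this realizes the space of directions `Σ_τ ∂TitsX`. -/
def linkSet (X : Type u) [MetricSpace X] (s : Set (IdealBoundary X)) :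
    Set (IdealBoundary X) :=
  {η : IdealBoundary X | ∀ ξ ∈ s, titsDist X ξ η ≤ Real.pi / 2}

/-! ## The group of boundary automorphisms -/

instance homeoGroup (B : Type v) [TopologicalSpace B] : Group (B ≃ₜ B) where
  mul f g := g.trans f
  one := Homeomorph.refl B
  inv := Homeomorph.symm
  mul_assoc f g h := Homeomorph.ext fun _ => rfl
  one_mul f := Homeomorph.ext fun _ => rfl
  mul_one f := Homeomorph.ext fun _ => rfl
  inv_mul_cancel f := Homeomorph.ext fun x => f.symm_apply_apply x

instance homeoTopology (B : Type v) [TopologicalSpace B] : TopologicalSpace (B ≃ₜ B) :=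
  TopologicalSpace.induced
    (fun g => ((⟨g, g.continuous⟩ : C(B, B)), (⟨(g.symm : B → B), g.symm.continuous⟩ : C(B, B))))
    inferInstance

/-- `Aut(∂∞X)`: the group of cone topology homeomorphisms of the ideal
boundary preserving the Tits metric, with the compact-open topology. -/
def boundaryAut (X : Type u) [MetricSpace X] :
    Subgroup (IdealBoundary X ≃ₜ IdealBoundary X) where
  carrier := {φ | ∀ ξ η : IdealBoundary X, titsDist X (φ ξ) (φ η) = titsDist X ξ η}
  one_mem' := by intro ξ η; rfl
  mul_mem' := by
    intro φ ψ hφ hψ ξ η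
    have h1 : ∀ ζ ζ' : IdealBoundary X, titsDist X (φ (ψ ζ)) (φ (ψ ζ')) = titsDist X ζ ζ' := by
      intro ζ ζ'
      rw [hφ (ψ ζ) (ψ ζ'), hψ ζ ζ']
    exact h1 ξ η
  inv_mem' := by
    intro φ hφ ξ η
    have := hφ (φ.symm ξ) (φ.symm η)
    simpa using this.symm

end CAT0Geo

/-!
Fix a ray `σ` asymptotic to `ξ`. Every ray `ρ` asymptotic to `σ` is the limit of the geodesic
segments from `ρ 0` to `σ n`, so the Busemann function of `σ` decreases at unit speed along `ρ`
and the comparison inequality for these segments survives in the limit. Hence moving a point of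
one asymptotic ray to the Busemann level of a point of another only shortens their distance, and
the asymptotic distance is the limit of the distances at equal levels. This yields the triangle
inequality; moreover midpoints at equal levels, continued towards `ξ` by asymptotic rays, are
approximate midpoints satisfying the CN-inequality. In the completion they converge to exact
CN-midpoints, which give the CAT(0) condition, and dyadic subdivision by midpoints gives geodesics.
-/

namespace CAT0Geo

open Filter Topology

section RealConvexity

theorem _root_.Convex.add_div_two_mem {s : Set ℝ} (hs : Convex ℝ s) {u v : ℝ} (hu : u ∈ s)
    (hv : v ∈ s) : (u + v) / 2 ∈ s := by
  convert hs hu hv (a := 1 / 2) (b := 1 / 2) (by norm_num) (by norm_num) (by norm_num) using 1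
  simp only [smul_eq_mul]; ring

/-- Maximum principle: at the leftmost maximum point of `g` the midpoint inequality is strict. -/
theorem nonpos_of_midpoint_le_on_Icc {g : ℝ → ℝ} (hg : ContinuousOn g (Icc 0 1))
    (hmid : ∀ u ∈ Icc (0 : ℝ) 1, ∀ v ∈ Icc (0 : ℝ) 1, g ((u + v) / 2) ≤ (g u + g v) / 2)
    (h0 : g 0 ≤ 0) (h1 : g 1 ≤ 0) {l : ℝ} (hl : l ∈ Icc (0 : ℝ) 1) : g l ≤ 0 := by
  obtain ⟨l₁, hl₁, hmax⟩ := isCompact_Icc.exists_isMaxOn (nonempty_Icc.2 zero_le_one) hg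
  set S := Icc (0 : ℝ) 1 ∩ g ⁻¹' Ici (g l₁)
  have hS : IsCompact S :=
    isCompact_Icc.of_isClosed_subset (hg.preimage_isClosed_of_isClosed isClosed_Icc isClosed_Ici)
      inter_subset_left
  have hl₁S : l₁ ∈ S := ⟨hl₁, mem_preimage.2 self_mem_Ici⟩
  have hl₀ : sInf S ∈ S := hS.sInf_mem ⟨l₁, hl₁S⟩
  set l₀ := sInf S
  suffices g l₀ ≤ 0 from (hmax hl).trans (le_trans hl₀.2 this)
  by_contra! hpos
  have h0l : 0 < l₀ := lt_of_le_of_ne hl₀.1.1 (by rintro h; rw [← h] at hpos; linarith)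
  have hl1 : l₀ < 1 := lt_of_le_of_ne hl₀.1.2 (by rintro h; rw [h] at hpos; linarith)
  set δ := min l₀ (1 - l₀)
  have hδ : 0 < δ := lt_min h0l (by linarith)
  have hleft : l₀ - δ ∈ Icc (0 : ℝ) 1 := ⟨by linarith [min_le_left l₀ (1 - l₀)], by linarith⟩
  have hright : l₀ + δ ∈ Icc (0 : ℝ) 1 := ⟨by linarith, by linarith [min_le_right l₀ (1 - l₀)]⟩
  have hlt : g (l₀ - δ) < g l₁ := by
    by_contra! hge
    have := (hS.isLeast_sInf ⟨l₁, hl₁S⟩).2 ⟨hleft, hge⟩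
    linarith
  have := hmid _ hleft _ hright
  rw [show (l₀ - δ + (l₀ + δ)) / 2 = l₀ by ring] at this
  have hmax_right : g (l₀ + δ) ≤ g l₁ := hmax hright
  have hmax_l₀ : g l₁ ≤ g l₀ := hl₀.2
  linarith

theorem convexOn_of_midpoint_le {s : Set ℝ} {f : ℝ → ℝ} (hs : Convex ℝ s)
    (hf : ContinuousOn f s) (hmid : ∀ u ∈ s, ∀ v ∈ s, f ((u + v) / 2) ≤ (f u + f v) / 2) :
    ConvexOn ℝ s f := by
  refine ⟨hs, fun x hx y hy a b ha hb hab => ?_⟩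
  have hseg : ∀ l ∈ Icc (0 : ℝ) 1, (1 - l) * x + l * y ∈ s := fun l hl =>
    hs hx hy (by linarith [hl.2]) hl.1 (by ring)
  set g : ℝ → ℝ := fun l => f ((1 - l) * x + l * y) - ((1 - l) * f x + l * f y)
  have hg : ContinuousOn g (Icc 0 1) :=
    (hf.comp (by fun_prop) hseg).sub (by fun_prop)
  have hgmid : ∀ u ∈ Icc (0 : ℝ) 1, ∀ v ∈ Icc (0 : ℝ) 1, g ((u + v) / 2) ≤ (g u + g v) / 2 := by
    intro u hu v hv
    have := hmid _ (hseg u hu) _ (hseg v hv)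
    simp only [g]
    rw [show ((1 - u) * x + u * y + ((1 - v) * x + v * y)) / 2
      = (1 - (u + v) / 2) * x + (u + v) / 2 * y by ring] at this
    linarith
  have := nonpos_of_midpoint_le_on_Icc hg hgmid (by simp [g]) (by simp [g])
    ⟨hb, by linarith⟩
  simp only [g, smul_eq_mul, show 1 - b = a by linarith] at this ⊢
  linarith

theorem antitoneOn_of_convexOn_of_le {f : ℝ → ℝ} {a M : ℝ} (hf : ConvexOn ℝ (Ici a) f)
    (hM : ∀ t ∈ Ici a, f t ≤ M) : AntitoneOn f (Ici a) := by
  intro s hs t ht hst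
  rcases hst.eq_or_lt with rfl | hst
  · exact le_rfl
  by_contra! hlt
  set k := (f t - f s) / (t - s)
  have hk : 0 < k := div_pos (by linarith) (by linarith)
  set U := t + (M - f t + 1) / k
  have htU : t < U := by
    have : f t ≤ M := hM t ht
    have : 0 < (M - f t + 1) / k := div_pos (by linarith) hk
    linarith
  have hslope := hf.slope_mono_adjacent hs (show U ∈ Ici a from le_trans ht htU.le) hst htU
  have hU := hM U (le_trans ht htU.le)
  rw [le_div_iff₀ (by linarith)] at hslope
  have : k * (U - t) = M - f t + 1 := by
    simp only [U, add_sub_cancel_left]; field_simp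
  linarith

end RealConvexity

section Midpoints

variable {X : Type u} [MetricSpace X]

def IsMetricMidpoint (m y z : X) : Prop :=
  dist y m = dist y z / 2 ∧ dist m z = dist y z / 2

theorem IsMetricMidpoint.symm {m y z : X} (h : IsMetricMidpoint m y z) :
    IsMetricMidpoint m z y := by
  obtain ⟨h₁, h₂⟩ := h
  exact ⟨by rw [dist_comm z m, dist_comm z y, h₂], by rw [dist_comm m y, dist_comm z y, h₁]⟩

theorem IsGeodesicOn.dist_eq_sub {γ : ℝ → X} {s : Set ℝ} (hγ : IsGeodesicOn γ s) {u v : ℝ}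
    (hu : u ∈ s) (hv : v ∈ s) (huv : u ≤ v) : dist (γ u) (γ v) = v - u := by
  rw [hγ hu hv, abs_of_nonpos (by linarith), neg_sub]

theorem exists_isMetricMidpoint (hG : GeodesicSpace X) (y z : X) :
    ∃ m, IsMetricMidpoint m y z := by
  obtain ⟨γ, hγ, hγ₀, hγ₁⟩ := hG y z
  have hd : 0 ≤ dist y z := dist_nonneg
  have h₁ := hγ.dist_eq_sub (u := 0) (v := dist y z / 2) ⟨le_rfl, hd⟩
    ⟨by linarith, by linarith⟩ (by linarith)
  have h₂ := hγ.dist_eq_sub (u := dist y z / 2) (v := dist y z) ⟨by linarith, by linarith⟩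
    ⟨hd, le_rfl⟩ (by linarith)
  rw [hγ₀] at h₁
  rw [hγ₁] at h₂
  exact ⟨γ (dist y z / 2), by linarith, by linarith⟩

theorem dist_le_of_isMetricMidpoint_left (hC : CAT0 X) {p q q' m m' : X}
    (hm : IsMetricMidpoint m p q) (hm' : IsMetricMidpoint m' p q') :
    dist m m' ≤ dist q q' / 2 := by
  have h₁ := hC q' p q m hm.1 hm.2
  have h₂ := hC m p q' m' hm'.1 hm'.2
  rw [dist_comm m p, hm.1, dist_comm m q'] at h₂
  rw [dist_comm q' p, dist_comm q' q] at h₁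
  refine (pow_le_pow_iff_left₀ dist_nonneg (by positivity) two_ne_zero).1 ?_
  nlinarith

/-- Compare both midpoints with a midpoint of `y₁` and `z₂`. -/
theorem dist_le_of_isMetricMidpoint (hC : CAT0 X) (hG : GeodesicSpace X)
    {m₁ y₁ z₁ m₂ y₂ z₂ : X} (h₁ : IsMetricMidpoint m₁ y₁ z₁) (h₂ : IsMetricMidpoint m₂ y₂ z₂) :
    dist m₁ m₂ ≤ (dist y₁ y₂ + dist z₁ z₂) / 2 := by
  obtain ⟨m₃, hm₃⟩ := exists_isMetricMidpoint hG y₁ z₂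
  have e₁ := dist_le_of_isMetricMidpoint_left hC h₁ hm₃
  have e₂ := dist_le_of_isMetricMidpoint_left hC hm₃.symm h₂.symm
  linarith [dist_triangle m₁ m₃ m₂]

end Midpoints

section ConstantSpeed

variable {X : Type u} [MetricSpace X]

def HasConstSpeedOn (c : ℝ → X) (k : ℝ) (s : Set ℝ) : Prop :=
  ∀ ⦃u⦄, u ∈ s → ∀ ⦃v⦄, v ∈ s → dist (c u) (c v) = k * |u - v|

theorem IsGeodesicOn.hasConstSpeedOn {γ : ℝ → X} {s : Set ℝ} (hγ : IsGeodesicOn γ s) :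
    HasConstSpeedOn γ 1 s := fun u hu v hv => by rw [one_mul, hγ hu hv]

theorem IsGeodesicSegment.hasConstSpeedOn_comp_mul {γ : ℝ → X} {L : ℝ}
    (hγ : IsGeodesicSegment γ 0 L) (hL : 0 ≤ L) :
    HasConstSpeedOn (fun l => γ (l * L)) L (Icc 0 1) := by
  have hmem : ∀ l ∈ Icc (0 : ℝ) 1, l * L ∈ Icc 0 L := fun l hl =>
    ⟨mul_nonneg hl.1 hL, mul_le_of_le_one_left hL hl.2⟩
  intro u hu v hv
  rw [hγ (hmem u hu) (hmem v hv), ← sub_mul, abs_mul, abs_of_nonneg hL, mul_comm]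

namespace HasConstSpeedOn

variable {c : ℝ → X} {k : ℝ} {s : Set ℝ}

theorem continuousOn (hc : HasConstSpeedOn c k s) (hk : 0 ≤ k) : ContinuousOn c s :=
  (LipschitzOnWith.of_dist_le_mul (K := ⟨k, hk⟩) fun u hu v hv => by
    rw [hc hu hv, Real.dist_eq]; rfl).continuousOn

theorem isMetricMidpoint (hc : HasConstSpeedOn c k s) {u v : ℝ} (hu : u ∈ s) (hv : v ∈ s)
    (huv : (u + v) / 2 ∈ s) : IsMetricMidpoint (c ((u + v) / 2)) (c u) (c v) := by
  constructor
  · rw [hc hu huv, hc hu hv, show u - (u + v) / 2 = (u - v) / 2 by ring, abs_div, abs_two]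
    ring
  · rw [hc huv hv, hc hu hv, show (u + v) / 2 - v = (u - v) / 2 by ring, abs_div, abs_two]
    ring

end HasConstSpeedOn

theorem convexOn_dist_of_hasConstSpeedOn (hC : CAT0 X) (hG : GeodesicSpace X)
    {c₁ c₂ : ℝ → X} {k₁ k₂ : ℝ} {s : Set ℝ} (hs : Convex ℝ s) (hk₁ : 0 ≤ k₁) (hk₂ : 0 ≤ k₂)
    (hc₁ : HasConstSpeedOn c₁ k₁ s) (hc₂ : HasConstSpeedOn c₂ k₂ s) :
    ConvexOn ℝ s fun t => dist (c₁ t) (c₂ t) := by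
  refine convexOn_of_midpoint_le hs
    (continuous_dist.comp_continuousOn ((hc₁.continuousOn hk₁).prodMk (hc₂.continuousOn hk₂)))
    fun u hu v hv => ?_
  have huv := hs.add_div_two_mem hu hv
  exact dist_le_of_isMetricMidpoint hC hG (hc₁.isMetricMidpoint hu hv huv)
    (hc₂.isMetricMidpoint hu hv huv)

end ConstantSpeed

section CNMidpoints

variable {Y : Type*}

def IsCNMidpoint [PseudoMetricSpace Y] (m p q : Y) : Prop :=
  ∀ w, dist w m ^ 2 ≤ (dist w p ^ 2 + dist w q ^ 2) / 2 - dist p q ^ 2 / 4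

def HasApproxCNMidpoints (Y : Type*) [PseudoMetricSpace Y] : Prop :=
  ∀ p q : Y, ∃ ms : ℕ → Y, ∀ w : Y, ∀ δ > 0, ∀ᶠ n in atTop,
    dist w (ms n) ^ 2 ≤ (dist w p ^ 2 + dist w q ^ 2) / 2 - dist p q ^ 2 / 4 + δ

section Metric

variable [MetricSpace Y] {m p q : Y}

theorem IsCNMidpoint.isMetricMidpoint (h : IsCNMidpoint m p q) : IsMetricMidpoint m p q := by
  have hp := h p
  have hq := h q
  rw [dist_self] at hp
  rw [dist_self, dist_comm q p, dist_comm q m] at hq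
  have hpm : dist p m ≤ dist p q / 2 :=
    (pow_le_pow_iff_left₀ dist_nonneg (by positivity) two_ne_zero).1 (by nlinarith)
  have hmq : dist m q ≤ dist p q / 2 :=
    (pow_le_pow_iff_left₀ dist_nonneg (by positivity) two_ne_zero).1 (by nlinarith)
  have := dist_triangle p m q
  exact ⟨by linarith, by linarith⟩

/-- A CN-midpoint of `y, z` coincides with every metric midpoint of `y, z`. -/
theorem cat0_of_forall_exists_isCNMidpoint (h : ∀ p q : Y, ∃ m, IsCNMidpoint m p q) :
    CAT0 Y := by
  intro x y z m hym hmz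
  obtain ⟨μ, hμ⟩ := h y z
  have hmμ := hμ m
  rw [dist_comm m y, hym, hmz] at hmμ
  obtain rfl : m = μ := dist_le_zero.1 <|
    (pow_le_pow_iff_left₀ dist_nonneg le_rfl two_ne_zero).1 (by linarith)
  exact hμ x

theorem exists_isCNMidpoint_of_tendsto [CompleteSpace Y] {ps qs ms : ℕ → Y}
    (hps : Tendsto ps atTop (𝓝 p)) (hqs : Tendsto qs atTop (𝓝 q))
    (hms : ∀ n, IsCNMidpoint (ms n) (ps n) (qs n)) : ∃ m, IsCNMidpoint m p q := by
  have hfst : Tendsto (fun k : ℕ × ℕ => k.1) atTop atTop :=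
    tendsto_fst.mono_left prod_atTop_atTop_eq.ge
  have hsnd : Tendsto (fun k : ℕ × ℕ => k.2) atTop atTop :=
    tendsto_snd.mono_left prod_atTop_atTop_eq.ge
  have hD := hps.dist hqs
  set B : ℕ × ℕ → ℝ := fun k => ((dist (ps k.1) (qs k.1) / 2 + dist (ps k.1) (ps k.2)) ^ 2 +
    (dist (ps k.1) (qs k.1) / 2 + dist (qs k.1) (qs k.2)) ^ 2) / 2 - dist (ps k.2) (qs k.2) ^ 2 / 4
  have hB : Tendsto B atTop (𝓝 0) := by
    have hD₁ := (hD.comp hfst).div_const 2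
    have he := cauchySeq_iff_tendsto_dist_atTop_0.1 hps.cauchySeq
    have hf := cauchySeq_iff_tendsto_dist_atTop_0.1 hqs.cauchySeq
    have h := ((((hD₁.add he).pow 2).add ((hD₁.add hf).pow 2)).div_const 2).sub
      (((hD.comp hsnd).pow 2).div_const 4)
    rwa [show ((dist p q / 2 + 0) ^ 2 + (dist p q / 2 + 0) ^ 2) / 2 - dist p q ^ 2 / 4 = 0 by
      ring] at h
  have hbound : ∀ k : ℕ × ℕ, dist (ms k.1) (ms k.2) ≤ Real.sqrt (B k) := fun ⟨n, j⟩ => by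
    obtain ⟨hpm, hmq⟩ := (hms n).isMetricMidpoint
    have hp' : dist (ms n) (ps j) ≤ dist (ps n) (qs n) / 2 + dist (ps n) (ps j) := by
      linarith [dist_triangle (ms n) (ps n) (ps j), dist_comm (ms n) (ps n)]
    have hq' : dist (ms n) (qs j) ≤ dist (ps n) (qs n) / 2 + dist (qs n) (qs j) := by
      linarith [dist_triangle (ms n) (qs n) (qs j)]
    refine Real.le_sqrt_of_sq_le ((hms j (ms n)).trans ?_)
    simp only [B]
    gcongr
  have hcs : CauchySeq ms := cauchySeq_iff_tendsto_dist_atTop_0.2 <| squeeze_zero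
    (fun _ => dist_nonneg) hbound (by simpa using hB.sqrt)
  obtain ⟨m, hm⟩ := cauchySeq_tendsto_of_complete hcs
  exact ⟨m, fun w => le_of_tendsto_of_tendsto' ((tendsto_const_nhds.dist hm).pow 2)
    (((((tendsto_const_nhds.dist hps).pow 2).add ((tendsto_const_nhds.dist hqs).pow 2)).div_const
      2).sub ((hD.pow 2).div_const 4)) fun n => hms n w⟩

end Metric

section Completion

open UniformSpace

variable [PseudoMetricSpace Y]

theorem exists_isCNMidpoint_coe (h : HasApproxCNMidpoints Y) (p q : Y) :
    ∃ m : Completion Y, IsCNMidpoint m (p : Completion Y) q := by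
  obtain ⟨ms, hms⟩ := h p q
  have hcs : CauchySeq fun n => (ms n : Completion Y) := by
    refine Metric.cauchySeq_iff.2 fun ε hε => ?_
    have hη : 0 < ε ^ 2 / 16 := by positivity
    obtain ⟨k, hkp, hkq⟩ := ((hms p _ hη).and (hms q _ hη)).exists
    obtain ⟨N, hN⟩ := (hms (ms k) _ hη).exists_forall_of_atTop
    rw [dist_self, dist_comm p (ms k)] at hkp
    rw [dist_self, dist_comm q (ms k), dist_comm q p] at hkq
    have hclose : ∀ n ≥ N, dist (ms k) (ms n) < ε / 2 := fun n hn =>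
      (pow_lt_pow_iff_left₀ dist_nonneg (by positivity) two_ne_zero).1 (by nlinarith [hN n hn])
    refine ⟨N, fun m hm n hn => ?_⟩
    rw [Completion.dist_eq]
    linarith [dist_triangle_left (ms m) (ms n) (ms k), hclose m hm, hclose n hn]
  obtain ⟨m, hm⟩ := cauchySeq_tendsto_of_complete hcs
  refine ⟨m, fun w => ?_⟩
  induction w using Completion.induction_on with
  | hp => exact isClosed_le (by fun_prop) (by fun_prop)
  | ih w =>
    refine le_of_forall_pos_le_add fun δ hδ =>
      le_of_tendsto ((tendsto_const_nhds.dist hm).pow 2) ?_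
    filter_upwards [hms w δ hδ] with n hn
    simpa only [Completion.dist_eq] using hn

theorem exists_isCNMidpoint_completion (h : HasApproxCNMidpoints Y) (p q : Completion Y) :
    ∃ m, IsCNMidpoint m p q := by
  have hseq : ∀ x : Completion Y, ∃ xs : ℕ → Y,
      Tendsto (fun n => (xs n : Completion Y)) atTop (𝓝 x) := fun x => by
    obtain ⟨ys, hys, hlim⟩ := mem_closure_iff_seq_limit.1 (Completion.denseRange_coe x)
    choose xs hxs using hys
    exact ⟨xs, by simpa only [hxs] using hlim⟩
  obtain ⟨ps, hps⟩ := hseq p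
  obtain ⟨qs, hqs⟩ := hseq q
  choose ms hms using fun n => exists_isCNMidpoint_coe h (ps n) (qs n)
  exact exists_isCNMidpoint_of_tendsto hps hqs hms

end Completion

end CNMidpoints

section DyadicPoints

variable {Y : Type*} (mid : Y → Y → Y) (p q : Y)

/-- `dyadicPoint mid p q n k` is the point of parameter `k / 2 ^ n` on the would-be geodesic from
`p` to `q` built by iterating `mid`. -/
def dyadicPoint : ℕ → ℕ → Y
  | 0, k => if k = 0 then p else q
  | n + 1, k => if k % 2 = 0 then dyadicPoint n (k / 2)
      else mid (dyadicPoint n (k / 2)) (dyadicPoint n (k / 2 + 1))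

theorem dyadicPoint_succ_two_mul (n k : ℕ) :
    dyadicPoint mid p q (n + 1) (2 * k) = dyadicPoint mid p q n k := by
  simp [dyadicPoint]

theorem dyadicPoint_succ_two_mul_add_one (n k : ℕ) :
    dyadicPoint mid p q (n + 1) (2 * k + 1) =
      mid (dyadicPoint mid p q n k) (dyadicPoint mid p q n (k + 1)) := by
  simp [dyadicPoint, Nat.add_mod, Nat.add_div]

theorem dyadicPoint_zero (n : ℕ) : dyadicPoint mid p q n 0 = p := by
  induction n with
  | zero => simp [dyadicPoint]
  | succ n ih => rw [← mul_zero 2, dyadicPoint_succ_two_mul, ih]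

theorem dyadicPoint_two_pow (n : ℕ) : dyadicPoint mid p q n (2 ^ n) = q := by
  induction n with
  | zero => simp [dyadicPoint]
  | succ n ih => rw [pow_succ', dyadicPoint_succ_two_mul, ih]

theorem dyadicPoint_mul_two_pow (n j k : ℕ) :
    dyadicPoint mid p q (n + j) (k * 2 ^ j) = dyadicPoint mid p q n k := by
  induction j with
  | zero => simp
  | succ j ih => rw [← add_assoc, pow_succ', mul_left_comm, dyadicPoint_succ_two_mul, ih]

variable [MetricSpace Y] {mid} (hmid : ∀ a b, IsMetricMidpoint (mid a b) a b)
include hmid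

theorem dist_dyadicPoint_succ (n : ℕ) {k : ℕ} (hk : k < 2 ^ n) :
    dist (dyadicPoint mid p q n k) (dyadicPoint mid p q n (k + 1)) = dist p q / 2 ^ n := by
  induction n generalizing k with
  | zero =>
    obtain rfl : k = 0 := by simpa using hk
    simp [dyadicPoint]
  | succ n ih =>
    rcases Nat.even_or_odd' k with ⟨j, rfl | rfl⟩
    · rw [dyadicPoint_succ_two_mul, dyadicPoint_succ_two_mul_add_one, (hmid _ _).1,
        ih (by omega), pow_succ, div_div]
    · rw [show 2 * j + 1 + 1 = 2 * (j + 1) by ring, dyadicPoint_succ_two_mul,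
        dyadicPoint_succ_two_mul_add_one, (hmid _ _).2, ih (by omega), pow_succ, div_div]

theorem dist_dyadicPoint_add_le (n : ℕ) {k d : ℕ} (hkd : k + d ≤ 2 ^ n) :
    dist (dyadicPoint mid p q n k) (dyadicPoint mid p q n (k + d)) ≤ d * (dist p q / 2 ^ n) := by
  induction d with
  | zero => simp
  | succ d ih =>
    rw [← add_assoc, Nat.cast_succ, add_one_mul]
    exact (dist_triangle _ _ _).trans (add_le_add (ih (by omega))
      (dist_dyadicPoint_succ p q hmid n (by omega)).le)

/-- The chain of consecutive dyadic points from `p` to `q` has length `dist p q`, so no step of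
it can be shortcut. -/
theorem dist_dyadicPoint_add (n : ℕ) {k d : ℕ} (hkd : k + d ≤ 2 ^ n) :
    dist (dyadicPoint mid p q n k) (dyadicPoint mid p q n (k + d)) = d * (dist p q / 2 ^ n) := by
  refine (dist_dyadicPoint_add_le p q hmid n hkd).antisymm ?_
  obtain ⟨r, hr⟩ := Nat.exists_eq_add_of_le hkd
  have h₁ := dist_dyadicPoint_add_le p q hmid n (k := 0) (d := k) (by omega)
  have h₂ := dist_dyadicPoint_add_le p q hmid n (k := k + d) (d := r) hr.ge
  rw [zero_add, dyadicPoint_zero] at h₁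
  rw [← hr, dyadicPoint_two_pow] at h₂
  have hsum : (k : ℝ) + d + r = 2 ^ n := by exact_mod_cast hr.symm
  have htotal : dist p q = (k + d + r) * (dist p q / 2 ^ n) := by
    rw [hsum, mul_div_cancel₀ _ (by positivity)]
  linarith [dist_triangle4 p (dyadicPoint mid p q n k) (dyadicPoint mid p q n (k + d)) q]

theorem dist_dyadicPoint_of_level_eq (n : ℕ) {a b : ℕ} (ha : a ≤ 2 ^ n) (hb : b ≤ 2 ^ n) :
    dist (dyadicPoint mid p q n a) (dyadicPoint mid p q n b) =
      |(a : ℝ) - b| * (dist p q / 2 ^ n) := by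
  wlog hab : a ≤ b generalizing a b
  · rw [dist_comm, abs_sub_comm]
    exact this hb ha (le_of_not_ge hab)
  obtain ⟨d, rfl⟩ := Nat.exists_eq_add_of_le hab
  rw [dist_dyadicPoint_add p q hmid n hb, Nat.cast_add, sub_add_cancel_left, abs_neg,
    Nat.abs_cast]

theorem dist_dyadicPoint (n m : ℕ) {k l : ℕ} (hk : k ≤ 2 ^ n) (hl : l ≤ 2 ^ m) :
    dist (dyadicPoint mid p q n k) (dyadicPoint mid p q m l) =
      |(k : ℝ) / 2 ^ n - l / 2 ^ m| * dist p q := by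
  wlog hnm : n ≤ m generalizing n m k l
  · rw [dist_comm, abs_sub_comm]
    exact this m n hl hk (le_of_not_ge hnm)
  obtain ⟨j, rfl⟩ := Nat.exists_eq_add_of_le hnm
  have hk' : k * 2 ^ j ≤ 2 ^ (n + j) := by rw [pow_add]; exact Nat.mul_le_mul_right _ hk
  rw [← dyadicPoint_mul_two_pow mid p q n j k, dist_dyadicPoint_of_level_eq p q hmid _ hk' hl,
    show (k : ℝ) / 2 ^ n - l / 2 ^ (n + j) = ((k * 2 ^ j : ℕ) - l) / 2 ^ (n + j) by
      push_cast; rw [pow_add]; field_simp,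
    abs_div, abs_of_pos (by positivity : (0 : ℝ) < 2 ^ (n + j))]
  ring

/-- The curve is the limit of the dyadic points `dyadicPoint n ⌊s 2ⁿ⌋`, whose mutual distances
are exact multiples of `dist p q` by `dist_dyadicPoint`. -/
theorem exists_dist_eq_mul_of_isMetricMidpoint [CompleteSpace Y] :
    ∃ γ : ℝ → Y, γ 0 = p ∧ γ 1 = q ∧
      ∀ s ∈ Icc (0 : ℝ) 1, ∀ s' ∈ Icc (0 : ℝ) 1, dist (γ s) (γ s') = |s - s'| * dist p q := by
  set K : ℝ → ℕ → ℕ := fun s n => ⌊s * 2 ^ n⌋₊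
  set a : ℝ → ℕ → ℝ := fun s n => (K s n : ℝ) / 2 ^ n
  have hK : ∀ s ∈ Icc (0 : ℝ) 1, ∀ n, K s n ≤ 2 ^ n := fun s hs n => by
    have : ⌊(1 : ℝ) * 2 ^ n⌋₊ = 2 ^ n := by
      rw [one_mul]; exact_mod_cast Nat.floor_natCast (2 ^ n)
    exact this ▸ Nat.floor_le_floor (by gcongr; exact hs.2)
  have ha : ∀ s ∈ Icc (0 : ℝ) 1, Tendsto (a s) atTop (𝓝 s) := fun s hs =>
    (tendsto_nat_floor_mul_div_atTop hs.1).comp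
      (tendsto_pow_atTop_atTop_of_one_lt one_lt_two)
  have hdyadic : ∀ s ∈ Icc (0 : ℝ) 1, ∀ s' ∈ Icc (0 : ℝ) 1, ∀ n m,
      dist (dyadicPoint mid p q n (K s n)) (dyadicPoint mid p q m (K s' m)) =
        |a s n - a s' m| * dist p q := fun s hs s' hs' n m =>
    dist_dyadicPoint p q hmid n m (hK s hs n) (hK s' hs' m)
  have hlim : ∀ s : ℝ, ∃ y : Y, s ∈ Icc (0 : ℝ) 1 →
      Tendsto (fun n => dyadicPoint mid p q n (K s n)) atTop (𝓝 y) := fun s => by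
    by_cases hs : s ∈ Icc (0 : ℝ) 1
    · refine (cauchySeq_tendsto_of_complete ?_).imp fun y hy _ => hy
      have hfst := (ha s hs).comp
        (tendsto_fst.mono_left (prod_atTop_atTop_eq (α := ℕ) (β := ℕ)).ge)
      have hsnd := (ha s hs).comp
        (tendsto_snd.mono_left (prod_atTop_atTop_eq (α := ℕ) (β := ℕ)).ge)
      refine cauchySeq_iff_tendsto_dist_atTop_0.2 ?_
      simp_rw [hdyadic s hs s hs]
      simpa using ((hfst.sub hsnd).abs.mul_const (dist p q))
    · exact ⟨p, fun h => absurd h hs⟩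
  choose γ hγ using hlim
  refine ⟨γ, tendsto_nhds_unique (hγ 0 ⟨le_rfl, zero_le_one⟩) (by simp [K, dyadicPoint_zero]),
    tendsto_nhds_unique (hγ 1 ⟨zero_le_one, le_rfl⟩) ?_, fun s hs s' hs' =>
      tendsto_nhds_unique ((hγ s hs).dist (hγ s' hs')) ?_⟩
  · have : ∀ n, K 1 n = 2 ^ n := fun n => by
      simp only [K, one_mul]; exact_mod_cast Nat.floor_natCast (2 ^ n)
    simp [this, dyadicPoint_two_pow]
  · simp_rw [hdyadic s hs s' hs']
    exact ((ha s hs).sub (ha s' hs')).abs.mul_const _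

end DyadicPoints

theorem geodesicSpace_of_forall_exists_isMetricMidpoint {Y : Type*} [MetricSpace Y]
    [CompleteSpace Y] (h : ∀ a b : Y, ∃ m, IsMetricMidpoint m a b) : GeodesicSpace Y := by
  choose mid hmid using h
  intro p q
  obtain ⟨γ, hγ₀, hγ₁, hγ⟩ := exists_dist_eq_mul_of_isMetricMidpoint p q hmid
  rcases (dist_nonneg : 0 ≤ dist p q).eq_or_lt with hpq | hpq
  · obtain rfl := dist_eq_zero.1 hpq.symm
    refine ⟨fun _ => p, fun t ht t' ht' => ?_, rfl, rfl⟩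
    rw [← hpq] at ht ht'
    simp [le_antisymm ht.2 ht.1, le_antisymm ht'.2 ht'.1]
  have hmem : ∀ t ∈ Icc 0 (dist p q), t / dist p q ∈ Icc (0 : ℝ) 1 := fun t ht =>
    ⟨div_nonneg ht.1 hpq.le, div_le_one_of_le₀ ht.2 hpq.le⟩
  refine ⟨fun t => γ (t / dist p q), fun t ht t' ht' => ?_, by simp [hγ₀],
    by simp [hpq.ne', hγ₁]⟩
  rw [hγ _ (hmem t ht) _ (hmem t' ht'), ← sub_div, abs_div, abs_of_pos hpq,
    div_mul_cancel₀ _ hpq.ne']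

section ComparisonInequalities

variable {X : Type u} [MetricSpace X]

/-- The CN-inequality is exactly midpoint convexity of this function. -/
theorem convexOn_dist_sq_sub_sq (hC : CAT0 X) {γ : ℝ → X} {s : Set ℝ} (hs : Convex ℝ s)
    (hγ : IsGeodesicOn γ s) (x : X) : ConvexOn ℝ s fun t => dist x (γ t) ^ 2 - t ^ 2 := by
  refine convexOn_of_midpoint_le hs (((continuous_const.dist continuous_id).comp_continuousOn
    (hγ.hasConstSpeedOn.continuousOn zero_le_one)).pow 2 |>.sub (continuousOn_id.pow 2))
    fun u hu v hv => ?_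
  have hm := hγ.hasConstSpeedOn.isMetricMidpoint hu hv (hs.add_div_two_mem hu hv)
  have hcn := hC x _ _ _ hm.1 hm.2
  rw [hγ hu hv, sq_abs] at hcn
  linarith

theorem mul_dist_sq_le_of_isGeodesicSegment (hC : CAT0 X) {γ : ℝ → X} {L t : ℝ}
    (hγ : IsGeodesicSegment γ 0 L) (x : X) (ht₀ : 0 ≤ t) (htL : t ≤ L) :
    L * dist x (γ t) ^ 2 ≤
      (L - t) * dist x (γ 0) ^ 2 + t * dist x (γ L) ^ 2 - t * (L - t) * L := by
  rcases (ht₀.trans htL).eq_or_lt with rfl | hL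
  · obtain rfl : t = 0 := le_antisymm htL ht₀
    simp
  have h := (convexOn_dist_sq_sub_sq hC (convex_Icc 0 L) hγ x).2
    (show (0 : ℝ) ∈ Icc 0 L from ⟨le_rfl, hL.le⟩) (show L ∈ Icc 0 L from ⟨hL.le, le_rfl⟩)
    (show 0 ≤ (L - t) / L from div_nonneg (by linarith) hL.le)
    (show 0 ≤ t / L from div_nonneg ht₀ hL.le) (by field_simp; ring)
  simp only [smul_eq_mul, mul_zero, zero_add, div_mul_cancel₀ t hL.ne'] at h
  have := mul_le_mul_of_nonneg_left h hL.le
  rw [mul_add, ← mul_assoc, ← mul_assoc, mul_div_cancel₀ _ hL.ne',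
    mul_div_cancel₀ _ hL.ne'] at this
  nlinarith

/-- Rescaled to `[0, 1]`, the distance between `c₁` and `c₂` is convex. -/
theorem dist_le_of_isGeodesicSegment (hC : CAT0 X) (hG : GeodesicSpace X) {c₁ c₂ : ℝ → X}
    {L₁ L₂ t : ℝ} (hc₁ : IsGeodesicSegment c₁ 0 L₁) (hc₂ : IsGeodesicSegment c₂ 0 L₂)
    (hL₂ : 0 < L₂) (ht₀ : 0 ≤ t) (ht₁ : t ≤ L₁) (ht₂ : t ≤ L₂) :
    dist (c₁ t) (c₂ t) ≤ dist (c₁ 0) (c₂ 0) + t / L₂ * (dist (c₁ L₁) (c₂ L₂) + |L₁ - L₂|) := by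
  have hL₁ : 0 ≤ L₁ := ht₀.trans ht₁
  set l := t / L₂
  have hl₀ : 0 ≤ l := div_nonneg ht₀ hL₂.le
  have hl₁ : l ≤ 1 := (div_le_one hL₂).2 ht₂
  have hconv := convexOn_dist_of_hasConstSpeedOn hC hG (convex_Icc 0 1) hL₁ hL₂.le
    (hc₁.hasConstSpeedOn_comp_mul hL₁) (hc₂.hasConstSpeedOn_comp_mul hL₂.le)
  have h := hconv.2 (show (0 : ℝ) ∈ Icc 0 1 from ⟨le_rfl, zero_le_one⟩)
    (show (1 : ℝ) ∈ Icc 0 1 from ⟨zero_le_one, le_rfl⟩) (show 0 ≤ 1 - l by linarith) hl₀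
    (by ring)
  have hlL₂ : l * L₂ = t := div_mul_cancel₀ t hL₂.ne'
  simp only [smul_eq_mul, mul_zero, zero_add, mul_one, zero_mul, one_mul, hlL₂] at h
  have hshift : dist (c₁ t) (c₁ (l * L₁)) = l * |L₁ - L₂| := by
    rw [hc₁ ⟨ht₀, ht₁⟩ ⟨mul_nonneg hl₀ hL₁, mul_le_of_le_one_left hL₁ hl₁⟩, ← hlL₂,
      ← mul_sub, abs_mul, abs_of_nonneg hl₀, abs_sub_comm]
  have hd₀ : 0 ≤ dist (c₁ 0) (c₂ 0) := dist_nonneg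
  calc dist (c₁ t) (c₂ t) ≤ dist (c₁ t) (c₁ (l * L₁)) + dist (c₁ (l * L₁)) (c₂ t) :=
        dist_triangle _ _ _
    _ ≤ l * |L₁ - L₂| + ((1 - l) * dist (c₁ 0) (c₂ 0) + l * dist (c₁ L₁) (c₂ L₂)) := by
        rw [hshift]; gcongr
    _ ≤ _ := by nlinarith

end ComparisonInequalities

section Rays

variable {X : Type u} [MetricSpace X] {σ : ℝ → X}

namespace IsGeodesicRay

theorem isGeodesicSegment (hσ : IsGeodesicRay σ) (L : ℝ) : IsGeodesicSegment σ 0 L :=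
  fun _ hu _ hv => hσ hu.1 hv.1

theorem shift (hσ : IsGeodesicRay σ) {t₀ : ℝ} (ht₀ : 0 ≤ t₀) :
    IsGeodesicRay fun s => σ (t₀ + s) := by
  intro u (hu : 0 ≤ u) v (hv : 0 ≤ v)
  rw [hσ (show 0 ≤ t₀ + u by linarith) (show 0 ≤ t₀ + v by linarith), add_sub_add_left_eq_sub]

theorem dist_zero (hσ : IsGeodesicRay σ) {t : ℝ} (ht : 0 ≤ t) : dist (σ 0) (σ t) = t := by
  rw [hσ (le_refl (0 : ℝ)) ht, zero_sub, abs_neg, abs_of_nonneg ht]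

theorem abs_dist_sub_le (hσ : IsGeodesicRay σ) (x : X) {t : ℝ} (ht : 0 ≤ t) :
    |dist x (σ t) - t| ≤ dist x (σ 0) := by
  have h := hσ.dist_zero ht
  rw [abs_sub_le_iff]
  constructor
  · linarith [dist_triangle x (σ 0) (σ t)]
  · linarith [dist_triangle (σ 0) x (σ t), dist_comm x (σ 0)]

theorem dist_sub_antitone (hσ : IsGeodesicRay σ) (x : X) {s t : ℝ} (hs : 0 ≤ s) (hst : s ≤ t) :
    dist x (σ t) - t ≤ dist x (σ s) - s := by
  have := hσ.dist_eq_sub hs (show 0 ≤ t by linarith) hst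
  linarith [dist_triangle x (σ s) (σ t)]

end IsGeodesicRay

/-- `asymp` for unbundled curves, such as shifted rays. -/
def IsAsymptotic (ρ σ : ℝ → X) : Prop := ∃ C, ∀ t, 0 ≤ t → dist (ρ t) (σ t) ≤ C

namespace IsAsymptotic

variable {ρ τ : ℝ → X}

theorem refl (σ : ℝ → X) : IsAsymptotic σ σ := ⟨0, fun t _ => (dist_self (σ t)).le⟩

theorem symm (h : IsAsymptotic ρ σ) : IsAsymptotic σ ρ :=
  h.imp fun _ hC t ht => (dist_comm (σ t) (ρ t)).trans_le (hC t ht)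

theorem trans (h₁ : IsAsymptotic ρ τ) (h₂ : IsAsymptotic τ σ) : IsAsymptotic ρ σ := by
  obtain ⟨C₁, h₁⟩ := h₁
  obtain ⟨C₂, h₂⟩ := h₂
  exact ⟨C₁ + C₂, fun t ht => (dist_triangle _ (τ t) _).trans (add_le_add (h₁ t ht) (h₂ t ht))⟩

theorem shift (h : IsAsymptotic ρ σ) (hσ : IsGeodesicRay σ) {t₀ : ℝ} (ht₀ : 0 ≤ t₀) :
    IsAsymptotic (fun s => ρ (t₀ + s)) σ := by
  obtain ⟨C, hC⟩ := h
  refine ⟨C + t₀, fun s hs => ?_⟩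
  have := hσ.dist_eq_sub hs (show 0 ≤ t₀ + s by linarith) (by linarith)
  linarith [dist_triangle (ρ (t₀ + s)) (σ (t₀ + s)) (σ s), hC (t₀ + s) (by linarith),
    dist_comm (σ s) (σ (t₀ + s))]

end IsAsymptotic

theorem busemann_bddBelow (hσ : IsGeodesicRay σ) (x : X) :
    BddBelow (range fun t : {t : ℝ // 0 ≤ t} => dist x (σ t.1) - t.1) := by
  refine ⟨-dist x (σ 0), ?_⟩
  rintro _ ⟨⟨t, ht⟩, rfl⟩
  linarith [abs_le.1 (hσ.abs_dist_sub_le x ht)]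

theorem busemann_le (hσ : IsGeodesicRay σ) (x : X) {t : ℝ} (ht : 0 ≤ t) :
    busemann σ x ≤ dist x (σ t) - t :=
  ciInf_le (busemann_bddBelow hσ x) ⟨t, ht⟩

theorem busemann_le_add_dist (hσ : IsGeodesicRay σ) (x y : X) :
    busemann σ x ≤ busemann σ y + dist x y := by
  rw [← sub_le_iff_le_add]
  refine le_ciInf fun ⟨t, ht⟩ => ?_
  linarith [busemann_le hσ x ht, dist_triangle x y (σ t)]

theorem tendsto_busemann (hσ : IsGeodesicRay σ) (x : X) :
    Tendsto (fun n : ℕ => dist x (σ n) - n) atTop (𝓝 (busemann σ x)) := by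
  have hanti : Antitone fun n : ℕ => dist x (σ n) - n := fun m n hmn =>
    hσ.dist_sub_antitone x (Nat.cast_nonneg m) (Nat.cast_le.2 hmn)
  have hbdd : BddBelow (range fun n : ℕ => dist x (σ n) - n) :=
    ⟨busemann σ x, by rintro _ ⟨n, rfl⟩; exact busemann_le hσ x (Nat.cast_nonneg n)⟩
  convert tendsto_atTop_ciInf hanti hbdd using 2
  refine le_antisymm (le_ciInf fun n => busemann_le hσ x (Nat.cast_nonneg n))
    (le_ciInf fun ⟨t, ht⟩ => ?_)
  exact (ciInf_le hbdd ⌈t⌉₊).trans (hσ.dist_sub_antitone x ht (Nat.le_ceil t))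

end Rays

section SegmentsToRay

variable {X : Type u} [MetricSpace X]

def geod (hG : GeodesicSpace X) (x y : X) : ℝ → X := (hG x y).choose

variable (hG : GeodesicSpace X)

theorem isGeodesicSegment_geod (x y : X) : IsGeodesicSegment (geod hG x y) 0 (dist x y) :=
  (hG x y).choose_spec.1

@[simp] theorem geod_zero (x y : X) : geod hG x y 0 = x := (hG x y).choose_spec.2.1

theorem geod_dist (x y : X) : geod hG x y (dist x y) = y := (hG x y).choose_spec.2.2

theorem dist_geod_left (x y : X) {t : ℝ} (ht₀ : 0 ≤ t) (ht : t ≤ dist x y) :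
    dist x (geod hG x y t) = t := by
  have := (isGeodesicSegment_geod hG x y).dist_eq_sub ⟨le_rfl, ht₀.trans ht⟩ ⟨ht₀, ht⟩ ht₀
  rwa [geod_zero, sub_zero] at this

theorem dist_geod_right (x y : X) {t : ℝ} (ht₀ : 0 ≤ t) (ht : t ≤ dist x y) :
    dist (geod hG x y t) y = dist x y - t := by
  have := (isGeodesicSegment_geod hG x y).dist_eq_sub ⟨ht₀, ht⟩ ⟨ht₀.trans ht, le_rfl⟩ ht
  rwa [geod_dist] at this

variable {σ : ℝ → X}

theorem IsGeodesicRay.le_dist (hσ : IsGeodesicRay σ) (x : X) {s t : ℝ} (ht : 0 ≤ t)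
    (hs : t + dist x (σ 0) ≤ s) : t ≤ dist x (σ s) := by
  have hs₀ : 0 ≤ s := le_trans (by positivity) hs
  linarith [abs_le.1 (hσ.abs_dist_sub_le x hs₀)]

/-- Applying the comparison inequality to the triangles `(x, σ r, σ s)` and `(x, P, σ s)`, where
`P` is the point at distance `t` on `[x, σ r]`, bounds the distance of the two segments at time `t`
by the decrease of `dist x (σ ·) - ·`, which tends to zero. -/
theorem dist_geod_sq_le (hC : CAT0 X) (hσ : IsGeodesicRay σ) (x : X) {r s t : ℝ}
    (hr : dist x (σ 0) ≤ r) (hrs : r ≤ s) (ht₀ : 0 ≤ t) (htr : t ≤ dist x (σ r))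
    (hts : t ≤ dist x (σ s)) :
    dist (geod hG x (σ r) t) (geod hG x (σ s) t) ^ 2 ≤
      2 * t * ((dist x (σ r) - r) - (dist x (σ s) - s)) := by
  rcases ht₀.eq_or_lt with rfl | ht
  · simp
  have hr₀ : 0 ≤ r := dist_nonneg.trans hr
  have ha : 0 < dist x (σ r) := ht.trans_le htr
  have hc : 0 < dist x (σ s) := ht.trans_le hts
  have hσrs : dist (σ r) (σ s) = s - r := hσ.dist_eq_sub hr₀ (hr₀.trans hrs) hrs
  have hsc : s - r ≤ dist x (σ s) := by
    linarith [abs_le.1 (hσ.abs_dist_sub_le x (hr₀.trans hrs))]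
  have hca : dist x (σ s) ≤ dist x (σ r) + (s - r) := by
    linarith [dist_triangle x (σ r) (σ s)]
  have hexcess : 0 ≤ dist x (σ r) - dist x (σ s) + (s - r) := by
    linarith [hσ.dist_sub_antitone x hr₀ hrs]
  have h₁ := mul_dist_sq_le_of_isGeodesicSegment hC (isGeodesicSegment_geod hG x (σ r))
    (σ s) ht₀ htr
  rw [geod_zero, geod_dist, dist_comm (σ s) x, dist_comm (σ s) (σ r), hσrs,
    dist_comm (σ s)] at h₁
  have h₂ := mul_dist_sq_le_of_isGeodesicSegment hC (isGeodesicSegment_geod hG x (σ s))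
    (geod hG x (σ r) t) ht₀ hts
  rw [geod_zero, geod_dist, dist_comm _ x, dist_geod_left hG x (σ r) ht₀ htr] at h₂
  generalize dist x (σ r) = a at *
  generalize dist x (σ s) = c at *
  generalize dist (geod hG x (σ r) t) (σ s) = S at *
  generalize dist (geod hG x (σ r) t) (geod hG x (σ s) t) = d at *
  have key : c * a * d ^ 2 ≤ t ^ 2 * ((s - r + c - a) * (a - c + (s - r))) := by
    nlinarith [mul_le_mul_of_nonneg_left h₁ ht₀]
  have hfactor : t * (s - r + c - a) ≤ 2 * (c * a) := by nlinarith
  refine le_of_mul_le_mul_right (a := c * a) ?_ (mul_pos hc ha)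
  nlinarith [mul_le_mul_of_nonneg_right hfactor (mul_nonneg ht₀ hexcess)]

end SegmentsToRay

section AsymptoticRays

variable {X : Type u} [MetricSpace X] (hC : CAT0 X) (hG : GeodesicSpace X) {σ ρ : ℝ → X}
include hC hG

theorem dist_geod_le (hσ : IsGeodesicRay σ) (hρ : IsGeodesicRay ρ) (x : X)
    {n t : ℝ} (ht : 0 ≤ t) (hn : t + dist x (σ 0) < n) :
    dist (geod hG x (σ n) t) (ρ t) ≤ dist x (ρ 0) + t / n * (dist (σ n) (ρ n) + dist x (σ 0)) := by
  have hn₀ : 0 < n := lt_of_le_of_lt (by positivity) hn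
  have h := dist_le_of_isGeodesicSegment hC hG (isGeodesicSegment_geod hG x (σ n))
    (hρ.isGeodesicSegment n) hn₀ ht (hσ.le_dist x ht hn.le)
    (by linarith [dist_nonneg (x := x) (y := σ 0)])
  rw [geod_zero, geod_dist] at h
  refine h.trans ?_
  have := hσ.abs_dist_sub_le x hn₀.le
  gcongr

theorem cauchySeq_geod (hσ : IsGeodesicRay σ) (x : X) {t : ℝ} (ht : 0 ≤ t) :
    CauchySeq fun n : ℕ => geod hG x (σ n) t := by
  refine Metric.cauchySeq_iff'.2 fun ε hε => ?_
  have hδ : 0 < ε ^ 2 / (2 * t + 1) := by positivity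
  obtain ⟨N, hNb, hN⟩ := (((tendsto_busemann hσ x).eventually
    (gt_mem_nhds (lt_add_of_pos_right _ hδ))).and
    (eventually_ge_atTop ⌈t + dist x (σ 0)⌉₊)).exists
  have hN' : t + dist x (σ 0) ≤ N := Nat.ceil_le.1 hN
  refine ⟨N, fun n hn => ?_⟩
  have hNn : (N : ℝ) ≤ n := Nat.cast_le.2 hn
  have hsq := dist_geod_sq_le hG hC hσ x (by linarith) hNn ht (hσ.le_dist x ht hN')
    (hσ.le_dist x ht (hN'.trans hNn))
  have hb := busemann_le hσ x (Nat.cast_nonneg n)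
  rw [dist_comm]
  refine (pow_lt_pow_iff_left₀ dist_nonneg hε.le two_ne_zero).1 (hsq.trans_lt ?_)
  calc 2 * t * ((dist x (σ N) - N) - (dist x (σ n) - n))
      ≤ 2 * t * (ε ^ 2 / (2 * t + 1)) := by gcongr; linarith
    _ < ε ^ 2 := by
      rw [mul_div_assoc', div_lt_iff₀ (by positivity)]; nlinarith [sq_pos_of_pos hε]

theorem exists_isGeodesicRay_isAsymptotic [CompleteSpace X] (hσ : IsGeodesicRay σ) (x : X) :
    ∃ ρ : ℝ → X, IsGeodesicRay ρ ∧ ρ 0 = x ∧ IsAsymptotic ρ σ := by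
  have hlim : ∀ t : ℝ, ∃ p : X, 0 ≤ t →
      Tendsto (fun n : ℕ => geod hG x (σ n) t) atTop (𝓝 p) := fun t => by
    by_cases ht : 0 ≤ t
    · obtain ⟨p, hp⟩ := cauchySeq_tendsto_of_complete (cauchySeq_geod hC hG hσ x ht)
      exact ⟨p, fun _ => hp⟩
    · exact ⟨x, fun h => absurd h ht⟩
  choose ρ hρ using hlim
  have hlarge : ∀ t, 0 ≤ t → ∀ᶠ n : ℕ in atTop, t + dist x (σ 0) < n := fun t _ =>
    tendsto_natCast_atTop_atTop.eventually_gt_atTop _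
  refine ⟨ρ, fun u (hu : 0 ≤ u) v (hv : 0 ≤ v) => ?_, ?_, 2 * dist x (σ 0), fun t ht => ?_⟩
  · refine tendsto_nhds_unique ((hρ u hu).dist (hρ v hv)) (tendsto_const_nhds.congr' ?_)
    filter_upwards [hlarge u hu, hlarge v hv] with n hun hvn
    exact ((isGeodesicSegment_geod hG x (σ n)) ⟨hu, hσ.le_dist x hu hun.le⟩
      ⟨hv, hσ.le_dist x hv hvn.le⟩).symm
  · exact tendsto_nhds_unique (hρ 0 le_rfl) (by simp)
  · refine le_of_tendsto ((hρ t ht).dist tendsto_const_nhds) ?_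
    filter_upwards [hlarge t ht] with n hn
    have hn₀ : (0 : ℝ) < n := lt_of_le_of_lt (by positivity) hn
    have h := dist_geod_le hC hG hσ hσ x ht hn
    rw [dist_self, zero_add] at h
    have : t / n * dist x (σ 0) ≤ dist x (σ 0) :=
      mul_le_of_le_one_left dist_nonneg
        ((div_le_one hn₀).2 (by linarith [dist_nonneg (x := x) (y := σ 0)]))
    linarith

theorem tendsto_geod_of_isAsymptotic (hσ : IsGeodesicRay σ) (hρ : IsGeodesicRay ρ)
    (hρσ : IsAsymptotic ρ σ) {t : ℝ} (ht : 0 ≤ t) :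
    Tendsto (fun n : ℕ => geod hG (ρ 0) (σ n) t) atTop (𝓝 (ρ t)) := by
  obtain ⟨C, hρσ⟩ := hρσ
  rw [tendsto_iff_dist_tendsto_zero]
  refine squeeze_zero' (Eventually.of_forall fun _ => dist_nonneg) ?_
    ((tendsto_const_div_atTop_nhds_zero_nat (t * (C + dist (ρ 0) (σ 0)))))
  filter_upwards [tendsto_natCast_atTop_atTop.eventually_gt_atTop (t + dist (ρ 0) (σ 0))]
    with n hn
  have h := dist_geod_le hC hG hσ hρ (ρ 0) ht hn
  rw [dist_self, zero_add, dist_comm (σ n)] at h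
  calc _ ≤ t / n * (C + dist (ρ 0) (σ 0)) := by
        refine h.trans (mul_le_mul_of_nonneg_left ?_ (by positivity))
        linarith [hρσ n (Nat.cast_nonneg n)]
    _ = t * (C + dist (ρ 0) (σ 0)) / n := by ring

theorem busemann_eq_sub_of_isAsymptotic (hσ : IsGeodesicRay σ) (hρ : IsGeodesicRay ρ)
    (hρσ : IsAsymptotic ρ σ) {t : ℝ} (ht : 0 ≤ t) :
    busemann σ (ρ t) = busemann σ (ρ 0) - t := by
  refine le_antisymm ?_ ?_
  · have hlim := (((tendsto_const_nhds (x := ρ t)).dist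
      (tendsto_geod_of_isAsymptotic hC hG hσ hρ hρσ ht)).add
      (tendsto_busemann hσ (ρ 0))).sub_const t
    rw [dist_self, zero_add] at hlim
    refine ge_of_tendsto hlim ?_
    filter_upwards [tendsto_natCast_atTop_atTop.eventually_ge_atTop (t + dist (ρ 0) (σ 0))]
      with n hn
    have hend := dist_geod_right hG (ρ 0) (σ n) ht (hσ.le_dist (ρ 0) ht hn)
    linarith [busemann_le hσ (ρ t) (Nat.cast_nonneg n),
      dist_triangle (ρ t) (geod hG (ρ 0) (σ n) t) (σ n),
      dist_comm (ρ t) (geod hG (ρ 0) (σ n) t)]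
  · linarith [busemann_le_add_dist hσ (ρ 0) (ρ t), hρ.dist_zero ht]

/-- The comparison inequality for the segments `[ρ 0, σ n]`, which converge to `ρ`, in the limit
`n → ∞`. -/
theorem dist_sq_le_of_isAsymptotic (hσ : IsGeodesicRay σ) (hρ : IsGeodesicRay ρ)
    (hρσ : IsAsymptotic ρ σ) (P : X) {u : ℝ} (hu : 0 ≤ u) :
    dist P (ρ u) ^ 2 ≤
      dist P (ρ 0) ^ 2 + 2 * u * (busemann σ P - busemann σ (ρ 0)) + u ^ 2 := by
  set x := ρ 0
  set E : ℕ → ℝ := fun n => dist P (σ n) - dist x (σ n) with hEdef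
  have hE : Tendsto E atTop (𝓝 (busemann σ P - busemann σ x)) :=
    ((tendsto_busemann hσ P).sub (tendsto_busemann hσ x)).congr fun n => by simp only [E]; ring
  have hL : Tendsto (fun n : ℕ => dist x (σ n)) atTop atTop :=
    ((tendsto_busemann hσ x).add_atTop tendsto_natCast_atTop_atTop).congr fun n => by ring
  have hLinv := hL.inv_tendsto_atTop
  have hR : Tendsto (fun n : ℕ => dist P x ^ 2 + u ^ 2 +
      u * (E n * (E n * (dist x (σ n))⁻¹ + 2)) - u * dist P x ^ 2 * (dist x (σ n))⁻¹) atTop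
      (𝓝 (dist P x ^ 2 + u ^ 2 + u * ((busemann σ P - busemann σ x) *
        ((busemann σ P - busemann σ x) * 0 + 2)) - u * dist P x ^ 2 * 0)) :=
    ((tendsto_const_nhds.add ((hE.mul ((hE.mul hLinv).add tendsto_const_nhds)).const_mul u)).sub
      (hLinv.const_mul _))
  have hlhs := ((tendsto_const_nhds (x := P)).dist
    (tendsto_geod_of_isAsymptotic hC hG hσ hρ hρσ hu)).pow 2
  refine (le_of_tendsto_of_tendsto hlhs hR ?_).trans_eq (by ring)
  filter_upwards [tendsto_natCast_atTop_atTop.eventually_gt_atTop (u + dist x (σ 0))] with n hn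
  have hLn : u < dist x (σ n) := by
    linarith [abs_le.1 (hσ.abs_dist_sub_le x (Nat.cast_nonneg n))]
  have hstar := mul_dist_sq_le_of_isGeodesicSegment hC (isGeodesicSegment_geod hG x (σ n)) P hu
    hLn.le
  rw [geod_zero, geod_dist] at hstar
  have hLne : dist x (σ n) ≠ 0 := (hu.trans_lt hLn).ne'
  refine le_of_mul_le_mul_left (hstar.trans_eq ?_) (hu.trans_lt hLn)
  simp only [hEdef]
  field_simp
  ring

end AsymptoticRays

section AsymptoticDistance

variable {X : Type u} [MetricSpace X]

instance : Nonempty {p : ℝ × ℝ // 0 ≤ p.1 ∧ 0 ≤ p.2} := ⟨⟨(0, 0), le_rfl, le_rfl⟩⟩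

theorem asympDistRays_nonneg (ρ τ : ℝ → X) : 0 ≤ asympDistRays ρ τ :=
  Real.iInf_nonneg fun _ => dist_nonneg

theorem asympDistRays_bddBelow (ρ τ : ℝ → X) :
    BddBelow (range fun p : {p : ℝ × ℝ // 0 ≤ p.1 ∧ 0 ≤ p.2} => dist (ρ p.1.1) (τ p.1.2)) :=
  ⟨0, by rintro _ ⟨p, rfl⟩; exact dist_nonneg⟩

theorem asympDistRays_le (ρ τ : ℝ → X) {t₁ t₂ : ℝ} (h₁ : 0 ≤ t₁) (h₂ : 0 ≤ t₂) :
    asympDistRays ρ τ ≤ dist (ρ t₁) (τ t₂) :=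
  ciInf_le (asympDistRays_bddBelow ρ τ) ⟨(t₁, t₂), h₁, h₂⟩

theorem exists_dist_lt_of_asympDistRays_lt {ρ τ : ℝ → X} {a : ℝ} (h : asympDistRays ρ τ < a) :
    ∃ t₁ t₂, 0 ≤ t₁ ∧ 0 ≤ t₂ ∧ dist (ρ t₁) (τ t₂) < a := by
  obtain ⟨⟨⟨t₁, t₂⟩, h₁, h₂⟩, hlt⟩ := exists_lt_of_ciInf_lt h
  exact ⟨t₁, t₂, h₁, h₂, hlt⟩

@[simp] theorem asympDistRays_self (ρ : ℝ → X) : asympDistRays ρ ρ = 0 :=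
  le_antisymm ((asympDistRays_le ρ ρ le_rfl le_rfl).trans_eq (dist_self _))
    (asympDistRays_nonneg ρ ρ)

theorem asympDistRays_comm (ρ τ : ℝ → X) : asympDistRays ρ τ = asympDistRays τ ρ := by
  have key : ∀ ρ τ : ℝ → X, asympDistRays ρ τ ≤ asympDistRays τ ρ := fun ρ τ =>
    le_ciInf fun ⟨⟨t₁, t₂⟩, h₁, h₂⟩ => (asympDistRays_le ρ τ h₂ h₁).trans_eq (dist_comm _ _)
  exact le_antisymm (key ρ τ) (key τ ρ)

variable (hC : CAT0 X) (hG : GeodesicSpace X) {σ ρ τ : ℝ → X}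
include hC hG

/-- Convex and bounded, hence nonincreasing. -/
theorem antitoneOn_dist_of_isAsymptotic (hρ : IsGeodesicRay ρ) (hτ : IsGeodesicRay τ)
    (hρτ : IsAsymptotic ρ τ) {a b : ℝ} (ha : 0 ≤ a) (hb : 0 ≤ b) :
    AntitoneOn (fun u => dist (ρ (a + u)) (τ (b + u))) (Ici 0) := by
  obtain ⟨C, hC'⟩ := (hρτ.shift hτ ha).trans ((IsAsymptotic.refl τ).shift hτ hb).symm
  exact antitoneOn_of_convexOn_of_le (convexOn_dist_of_hasConstSpeedOn hC hG (convex_Ici 0)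
    zero_le_one zero_le_one (hρ.shift ha).hasConstSpeedOn (hτ.shift hb).hasConstSpeedOn) hC'

/-- The two points on the left lie on the same horosphere `busemann σ = -s`. Moving `τ t₂` along
`τ` down to the level of `ρ t₁` shortens the distance (Pythagoras), and then both points may be
pushed further along their rays. -/
theorem dist_aligned_le_of_busemann_le (hσ : IsGeodesicRay σ) (hρ : IsGeodesicRay ρ)
    (hτ : IsGeodesicRay τ) (hρσ : IsAsymptotic ρ σ) (hτσ : IsAsymptotic τ σ) {t₁ t₂ s : ℝ}
    (h₁ : 0 ≤ t₁) (h₂ : 0 ≤ t₂) (hlev : busemann σ (ρ t₁) ≤ busemann σ (τ t₂))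
    (hs : t₁ - busemann σ (ρ 0) ≤ s) :
    dist (ρ (busemann σ (ρ 0) + s)) (τ (busemann σ (τ 0) + s)) ≤ dist (ρ t₁) (τ t₂) := by
  have hρt := busemann_eq_sub_of_isAsymptotic hC hG hσ hρ hρσ h₁
  have hτt := busemann_eq_sub_of_isAsymptotic hC hG hσ hτ hτσ h₂
  set v := busemann σ (τ t₂) - busemann σ (ρ t₁)
  have hv : 0 ≤ v := sub_nonneg.2 hlev
  have hpyth := dist_sq_le_of_isAsymptotic hC hG hσ (hτ.shift h₂) (hτσ.shift hσ h₂) (ρ t₁) hv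
  simp only [add_zero] at hpyth
  have hstep : dist (ρ t₁) (τ (t₂ + v)) ≤ dist (ρ t₁) (τ t₂) :=
    (pow_le_pow_iff_left₀ dist_nonneg dist_nonneg two_ne_zero).1 (by nlinarith)
  have hanti := antitoneOn_dist_of_isAsymptotic hC hG hρ hτ (hρσ.trans hτσ.symm) h₁
    (add_nonneg h₂ hv) (le_refl (0 : ℝ)) (show 0 ≤ s - (t₁ - busemann σ (ρ 0)) by linarith)
    (by linarith)
  simp only [add_zero] at hanti
  rw [show t₁ + (s - (t₁ - busemann σ (ρ 0))) = busemann σ (ρ 0) + s by ring,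
    show t₂ + v + (s - (t₁ - busemann σ (ρ 0))) = busemann σ (τ 0) + s by
      simp only [v]; rw [hρt, hτt]; ring] at hanti
  exact hanti.trans hstep

theorem dist_aligned_le (hσ : IsGeodesicRay σ) (hρ : IsGeodesicRay ρ) (hτ : IsGeodesicRay τ)
    (hρσ : IsAsymptotic ρ σ) (hτσ : IsAsymptotic τ σ) {t₁ t₂ s : ℝ} (h₁ : 0 ≤ t₁) (h₂ : 0 ≤ t₂)
    (hs₁ : t₁ - busemann σ (ρ 0) ≤ s) (hs₂ : t₂ - busemann σ (τ 0) ≤ s) :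
    dist (ρ (busemann σ (ρ 0) + s)) (τ (busemann σ (τ 0) + s)) ≤ dist (ρ t₁) (τ t₂) := by
  rcases le_total (busemann σ (ρ t₁)) (busemann σ (τ t₂)) with hlev | hlev
  · exact dist_aligned_le_of_busemann_le hC hG hσ hρ hτ hρσ hτσ h₁ h₂ hlev hs₁
  · rw [dist_comm, dist_comm (ρ t₁)]
    exact dist_aligned_le_of_busemann_le hC hG hσ hτ hρ hτσ hρσ h₂ h₁ hlev hs₂

theorem tendsto_dist_aligned (hσ : IsGeodesicRay σ) (hρ : IsGeodesicRay ρ)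
    (hτ : IsGeodesicRay τ) (hρσ : IsAsymptotic ρ σ) (hτσ : IsAsymptotic τ σ) :
    Tendsto (fun s => dist (ρ (busemann σ (ρ 0) + s)) (τ (busemann σ (τ 0) + s))) atTop
      (𝓝 (asympDistRays ρ τ)) := by
  refine tendsto_order.2 ⟨fun a ha => ?_, fun a ha => ?_⟩
  · filter_upwards [eventually_ge_atTop (max (-busemann σ (ρ 0)) (-busemann σ (τ 0)))]
      with s hs
    exact ha.trans_le (asympDistRays_le ρ τ (by linarith [le_of_max_le_left hs])
      (by linarith [le_of_max_le_right hs]))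
  · obtain ⟨t₁, t₂, h₁, h₂, hlt⟩ := exists_dist_lt_of_asympDistRays_lt ha
    filter_upwards [eventually_ge_atTop (max (t₁ - busemann σ (ρ 0)) (t₂ - busemann σ (τ 0)))]
      with s hs
    exact (dist_aligned_le hC hG hσ hρ hτ hρσ hτσ h₁ h₂ (le_of_max_le_left hs)
      (le_of_max_le_right hs)).trans_lt hlt

theorem asympDistRays_triangle (hσ : IsGeodesicRay σ) {ζ : ℝ → X} (hρ : IsGeodesicRay ρ)
    (hτ : IsGeodesicRay τ) (hζ : IsGeodesicRay ζ) (hρσ : IsAsymptotic ρ σ)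
    (hτσ : IsAsymptotic τ σ) (hζσ : IsAsymptotic ζ σ) :
    asympDistRays ρ ζ ≤ asympDistRays ρ τ + asympDistRays τ ζ :=
  le_of_tendsto_of_tendsto (tendsto_dist_aligned hC hG hσ hρ hζ hρσ hζσ)
    ((tendsto_dist_aligned hC hG hσ hρ hτ hρσ hτσ).add
      (tendsto_dist_aligned hC hG hσ hτ hζ hτσ hζσ))
    (Eventually.of_forall fun _ => dist_triangle _ _ _)

end AsymptoticDistance

section StrongAsymptoteClasses

variable {X : Type u} [MetricSpace X] {ξ : IdealBoundary X}

theorem asymp_equivalence : Equivalence (asymp X) :=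
  ⟨fun ρ => IsAsymptotic.refl ρ.1, IsAsymptotic.symm, IsAsymptotic.trans⟩

theorem isAsymptotic_of_rayClass_eq {ρ τ : Rays X} (h : rayClass ρ = rayClass τ) :
    IsAsymptotic ρ.1 τ.1 :=
  asymp_equivalence.eqvGen_iff.1 (Quot.eqvGen_exact h)

theorem raysTo.isAsymptotic (ρ τ : raysTo ξ) : IsAsymptotic ρ.1.1 τ.1.1 :=
  isAsymptotic_of_rayClass_eq (ρ.2.trans τ.2.symm)

variable (hHad : HadamardSpace X)
include hHad

/-- The asymptotic distance on the rays asymptotic to `ξ`; its metric quotient is the space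
`X*_ξ` of strong asymptote classes. -/
abbrev asympDistPseudoMetricSpace (ξ : IdealBoundary X) : PseudoMetricSpace (raysTo ξ) where
  dist ρ τ := asympDistRays ρ.1.1 τ.1.1
  dist_self ρ := asympDistRays_self ρ.1.1
  dist_comm ρ τ := asympDistRays_comm ρ.1.1 τ.1.1
  dist_triangle ρ τ ζ := asympDistRays_triangle hHad.cat0 hHad.geodesic ρ.1.2 ρ.1.2 τ.1.2 ζ.1.2
    (IsAsymptotic.refl _) (τ.isAsymptotic ρ) (ζ.isAsymptotic ρ)

/-- Midpoints of pairs of points at equal Busemann level far out on `ρ` and `τ` satisfy the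
CN-inequality in `X`, which passes to the limit by `tendsto_dist_aligned`. -/
theorem exists_seq_asympDistRays_sq_le (ρ τ : raysTo ξ) :
    ∃ ms : ℕ → raysTo ξ, ∀ w : raysTo ξ, ∀ δ > 0, ∀ᶠ n in atTop,
      asympDistRays w.1.1 (ms n).1.1 ^ 2 ≤ (asympDistRays w.1.1 ρ.1.1 ^ 2 +
        asympDistRays w.1.1 τ.1.1 ^ 2) / 2 - asympDistRays ρ.1.1 τ.1.1 ^ 2 / 4 + δ := by
  have hC := hHad.cat0
  have hG := hHad.geodesic
  have := hHad.complete
  set σ := ρ.1.1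
  set level : raysTo ξ → ℕ → X := fun w n => w.1.1 (busemann σ (w.1.1 0) + n)
  choose m hm using fun n => exists_isMetricMidpoint hG (level ρ n) (level τ n)
  choose γ hγ hγ₀ hγσ using fun n => exists_isGeodesicRay_isAsymptotic hC hG ρ.1.2 (m n)
  refine ⟨fun n => ⟨⟨γ n, hγ n⟩,
    (Quot.sound (r := asymp X) (a := ⟨γ n, hγ n⟩) (hγσ n)).trans ρ.2⟩, fun w δ hδ => ?_⟩
  have hlim : ∀ w' : raysTo ξ, Tendsto (fun n => dist (level w n) (level w' n)) atTop
      (𝓝 (asympDistRays w.1.1 w'.1.1)) := fun w' =>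
    (tendsto_dist_aligned hC hG ρ.1.2 w.1.2 w'.1.2 (w.isAsymptotic ρ)
      (w'.isAsymptotic ρ)).comp tendsto_natCast_atTop_atTop
  have hCN := ((((hlim ρ).pow 2).add ((hlim τ).pow 2)).div_const 2).sub
    ((((tendsto_dist_aligned hC hG ρ.1.2 ρ.1.2 τ.1.2 (IsAsymptotic.refl _)
      (τ.isAsymptotic ρ)).comp tendsto_natCast_atTop_atTop).pow 2).div_const 4)
  filter_upwards [hCN.eventually (gt_mem_nhds (lt_add_of_pos_right _ hδ)),
    tendsto_natCast_atTop_atTop.eventually_ge_atTop (-busemann σ (w.1.1 0))] with n hn hn₀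
  have hd : asympDistRays w.1.1 (γ n) ≤ dist (level w n) (m n) := by
    simpa only [hγ₀] using asympDistRays_le w.1.1 (γ n) (by linarith) le_rfl
  calc asympDistRays w.1.1 (γ n) ^ 2 ≤ dist (level w n) (m n) ^ 2 :=
        pow_le_pow_left₀ (asympDistRays_nonneg _ _) hd 2
    _ ≤ _ := hC _ _ _ _ (hm n).1 (hm n).2
    _ ≤ _ := hn.le

end StrongAsymptoteClasses

/-- Spaces of strong asymptote classes.
Let `X` be a Hadamard space and `ξ ∈ ∂∞X`.  On the set of geodesic rays
asymptotic to `ξ`, the asymptotic distance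
`d_ξ(ρ₁,ρ₂) = inf_{t₁,t₂} d(ρ₁(t₁),ρ₂(t₂))` induces a metric on the set
`X*_ξ` of strong asymptote classes, and the metric completion `X_ξ` of
`X*_ξ` is a Hadamard space.  (We formalize the completion of the induced
metric as a complete metric space `Xξ` together with a map `j` from the rays
asymptotic to `ξ` which realizes exactly the asymptotic distance — thereby
`j` factors through the set of strong asymptote classes and embeds it
isometrically — and which has dense range.) -/
theorem strong_asymptote_space_is_hadamard {X : Type u} [MetricSpace X]
    (hHad : HadamardSpace X) (ξ : IdealBoundary X) :
    ∃ (Xξ : Type u) (iXξ : MetricSpace Xξ) (j : raysTo ξ → Xξ),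
      (∀ ρ₁ ρ₂ : raysTo ξ,
        @dist Xξ iXξ.toPseudoMetricSpace.toDist (j ρ₁) (j ρ₂) =
          asympDistRays ρ₁.1.1 ρ₂.1.1) ∧
      @DenseRange Xξ (mtop iXξ) (raysTo ξ) j ∧
      @HadamardSpace Xξ iXξ := by
  let := asympDistPseudoMetricSpace hHad ξ
  have hmid : ∀ p q : UniformSpace.Completion (raysTo ξ), ∃ m, IsCNMidpoint m p q :=
    exists_isCNMidpoint_completion (exists_seq_asympDistRays_sq_le hHad)
  refine ⟨UniformSpace.Completion (raysTo ξ), inferInstance, (↑),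
    UniformSpace.Completion.dist_eq, UniformSpace.Completion.denseRange_coe, inferInstance, ?_,
    cat0_of_forall_exists_isCNMidpoint hmid⟩
  exact geodesicSpace_of_forall_exists_isMetricMidpoint fun p q =>
    (hmid p q).imp fun _ hm => hm.isMetricMidpoint

end CAT0Geo
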